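/- arXiv:2507.10032 — 4 statements merged into one kernel-verified Lean document; each statement's English description precedes it below -/
import Mathlib

section
/- Let v : ℝ × ℝ³ → ℝ³ and p : ℝ × ℝ³ → ℝ be smooth and satisfy the Euler equation (D_t v)^i + ∂_i p = 0 for i = 1,2,3 at every point of ℝ × ℝ³. Then for every j ∈ {1,2,3} and every point, the second-order commutator satisfies: D_t(D_t(∂_j p)) − ∂_j(D_t(D_t p)) = Σ_{i=1}^{3} ( 2 ∂_j v^i · (D_t² v)^i + ∂_j (D_t v)^i · (D_t v)^i ), where D_t² v := D_t(D_t v). -/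
noncomputable section

/-- Spatial partial derivative in the `i`-th coordinate direction of a
time-dependent scalar function on `ℝ × ℝ³`. -/
def pd (i : Fin 3) (f : ℝ → (Fin 3 → ℝ) → ℝ) : ℝ → (Fin 3 → ℝ) → ℝ :=
  fun t x => fderiv ℝ (f t) x (Pi.single i 1)

/-- Time derivative of a time-dependent scalar function. -/
def pt (f : ℝ → (Fin 3 → ℝ) → ℝ) : ℝ → (Fin 3 → ℝ) → ℝ :=
  fun t x => deriv (fun s => f s x) t

/-- Material derivative `D_t f = ∂_t f + Σ_k v^k ∂_k f` with respect to the
velocity field `v`. -/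
def Dt (v : ℝ → (Fin 3 → ℝ) → Fin 3 → ℝ) (f : ℝ → (Fin 3 → ℝ) → ℝ) :
    ℝ → (Fin 3 → ℝ) → ℝ :=
  fun t x => pt f t x + ∑ k, v t x k * pd k f t x

/-- Smoothness (C^∞) of a scalar function of time and space, viewed jointly. -/
def SmoothFn (f : ℝ → (Fin 3 → ℝ) → ℝ) : Prop :=
  ContDiff ℝ (⊤ : ℕ∞) (fun p : ℝ × (Fin 3 → ℝ) => f p.1 p.2)

/-- Smoothness (C^∞) of a time-dependent vector field, componentwise. -/
def SmoothVec (v : ℝ → (Fin 3 → ℝ) → Fin 3 → ℝ) : Prop :=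
  ∀ i : Fin 3, SmoothFn (fun t x => v t x i)

namespace Aux

abbrev E : Type := ℝ × (Fin 3 → ℝ)

def lift (f : ℝ → (Fin 3 → ℝ) → ℝ) : E → ℝ := fun q => f q.1 q.2

def ev (j : Fin 3) : E := ((0 : ℝ), Pi.single j 1)

lemma decomp (y : Fin 3 → ℝ) : ((0 : ℝ), y) = ∑ k, y k • ev k := by
  have h1 : (∑ k, y k • ev k).1 = 0 := by
    rw [Prod.fst_sum]; simp [ev]
  have h2 : (∑ k, y k • ev k).2 = y := by
    rw [Prod.snd_sum]
    funext m
    simp [ev, Finset.sum_apply, Pi.single_apply]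
  rw [Prod.ext_iff]; exact ⟨h1.symm, h2.symm⟩

lemma diffAt (hf : SmoothFn f) (q : E) : DifferentiableAt ℝ (lift f) q :=
  (hf.differentiable (by simp)).differentiableAt

lemma pd_eq {f : ℝ → (Fin 3 → ℝ) → ℝ} (hf : SmoothFn f) (i : Fin 3) (t : ℝ)
    (x : Fin 3 → ℝ) : pd i f t x = fderiv ℝ (lift f) (t, x) (ev i) := by
  have h1 : HasFDerivAt (fun y : Fin 3 → ℝ => ((t, y) : E))
      (ContinuousLinearMap.inr ℝ ℝ (Fin 3 → ℝ)) x :=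
    HasFDerivAt.prodMk (hasFDerivAt_const t x) (hasFDerivAt_id x)
  have h2 : HasFDerivAt (lift f) (fderiv ℝ (lift f) (t, x)) (t, x) :=
    ((hf.differentiable (by simp)) (t, x)).hasFDerivAt
  have h3 : HasFDerivAt (fun y => lift f (t, y))
      ((fderiv ℝ (lift f) (t, x)).comp (ContinuousLinearMap.inr ℝ ℝ (Fin 3 → ℝ))) x := h2.comp x h1
  have h4 : f t = fun y => lift f (t, y) := rfl
  unfold pd
  rw [h4, h3.fderiv]
  rfl

lemma pt_eq {f : ℝ → (Fin 3 → ℝ) → ℝ} (hf : SmoothFn f) (t : ℝ)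
    (x : Fin 3 → ℝ) : pt f t x = fderiv ℝ (lift f) (t, x) ((1 : ℝ), (0 : Fin 3 → ℝ)) := by
  have h1 : HasDerivAt (fun s : ℝ => ((s, x) : E)) ((1 : ℝ), (0 : Fin 3 → ℝ)) t :=
    HasDerivAt.prodMk (hasDerivAt_id t) (hasDerivAt_const t x)
  have h2 : HasFDerivAt (lift f) (fderiv ℝ (lift f) (t, x)) (t, x) :=
    ((hf.differentiable (by simp)) (t, x)).hasFDerivAt
  have h3 := h2.comp_hasDerivAt t h1
  unfold pt
  exact h3.deriv

lemma Dt_eq {f : ℝ → (Fin 3 → ℝ) → ℝ} (hf : SmoothFn f)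
    (v : ℝ → (Fin 3 → ℝ) → Fin 3 → ℝ) (t : ℝ) (x : Fin 3 → ℝ) :
    Dt v f t x = fderiv ℝ (lift f) (t, x) ((1 : ℝ), v t x) := by
  have hd : ((1 : ℝ), v t x) = ((1 : ℝ), (0 : Fin 3 → ℝ)) + ∑ k, v t x k • ev k := by
    rw [← decomp]; ext <;> simp
  rw [hd, map_add, map_sum]
  unfold Dt
  rw [pt_eq hf]
  congr 1
  refine Finset.sum_congr rfl fun k _ => ?_
  rw [map_smul, pd_eq hf, smul_eq_mul]

lemma smooth_pd {f : ℝ → (Fin 3 → ℝ) → ℝ} (hf : SmoothFn f) (i : Fin 3) :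
    SmoothFn (pd i f) := by
  have h : (fun q : E => pd i f q.1 q.2) = fun q => fderiv ℝ (lift f) q (ev i) := by
    funext q
    exact pd_eq hf i q.1 q.2
  unfold SmoothFn
  rw [h]
  exact (hf.fderiv_right (by simp)).clm_apply contDiff_const

lemma smoothV {v : ℝ → (Fin 3 → ℝ) → Fin 3 → ℝ} (hv : SmoothVec v) :
    ContDiff ℝ (⊤ : ℕ∞) (fun q : E => ((1 : ℝ), fun i => v q.1 q.2 i)) :=
  contDiff_const.prodMk (contDiff_pi.2 fun i => hv i)

lemma smooth_Dt {f : ℝ → (Fin 3 → ℝ) → ℝ} {v : ℝ → (Fin 3 → ℝ) → Fin 3 → ℝ}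
    (hv : SmoothVec v) (hf : SmoothFn f) : SmoothFn (Dt v f) := by
  have h : (fun q : E => Dt v f q.1 q.2)
      = fun q => fderiv ℝ (lift f) q ((1 : ℝ), fun i => v q.1 q.2 i) := by
    funext q
    have := Dt_eq hf v q.1 q.2
    simpa using this
  unfold SmoothFn
  rw [h]
  exact (hf.fderiv_right (by simp)).clm_apply (smoothV hv)

lemma smooth_add {f g : ℝ → (Fin 3 → ℝ) → ℝ} (hf : SmoothFn f) (hg : SmoothFn g) :
    SmoothFn (fun t x => f t x + g t x) := hf.add hg

lemma smooth_neg {f : ℝ → (Fin 3 → ℝ) → ℝ} (hf : SmoothFn f) :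
    SmoothFn (fun t x => -f t x) := hf.neg

lemma smooth_mul {f g : ℝ → (Fin 3 → ℝ) → ℝ} (hf : SmoothFn f) (hg : SmoothFn g) :
    SmoothFn (fun t x => f t x * g t x) := hf.mul hg

lemma smooth_sum {f : Fin 3 → ℝ → (Fin 3 → ℝ) → ℝ} (hf : ∀ i, SmoothFn (f i)) :
    SmoothFn (fun t x => ∑ i, f i t x) :=
  ContDiff.sum fun i _ => hf i

lemma diff_t {f : ℝ → (Fin 3 → ℝ) → ℝ} (hf : SmoothFn f) (t : ℝ) (x : Fin 3 → ℝ) :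
    DifferentiableAt ℝ (fun s => f s x) t := by
  have h1 : HasDerivAt (fun s : ℝ => ((s, x) : E)) ((1 : ℝ), (0 : Fin 3 → ℝ)) t :=
    HasDerivAt.prodMk (hasDerivAt_id t) (hasDerivAt_const t x)
  exact (((hf.differentiable (by simp)) (t, x)).hasFDerivAt.comp_hasDerivAt t h1).differentiableAt

lemma diff_x {f : ℝ → (Fin 3 → ℝ) → ℝ} (hf : SmoothFn f) (t : ℝ) (x : Fin 3 → ℝ) :
    DifferentiableAt ℝ (f t) x := by
  have h1 : HasFDerivAt (fun y : Fin 3 → ℝ => ((t, y) : E))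
      (ContinuousLinearMap.inr ℝ ℝ (Fin 3 → ℝ)) x :=
    HasFDerivAt.prodMk (hasFDerivAt_const t x) (hasFDerivAt_id x)
  have h3 : HasFDerivAt (fun y => lift f (t, y))
      ((fderiv ℝ (lift f) (t, x)).comp (ContinuousLinearMap.inr ℝ ℝ (Fin 3 → ℝ))) x :=
    (((hf.differentiable (by simp)) (t, x)).hasFDerivAt).comp x h1
  exact h3.differentiableAt

lemma pt_add {f g : ℝ → (Fin 3 → ℝ) → ℝ} (hf : SmoothFn f) (hg : SmoothFn g)
    (t : ℝ) (x : Fin 3 → ℝ) :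
    pt (fun t x => f t x + g t x) t x = pt f t x + pt g t x := by
  unfold pt
  exact deriv_add (diff_t hf t x) (diff_t hg t x)

lemma pt_neg (f : ℝ → (Fin 3 → ℝ) → ℝ) (t : ℝ) (x : Fin 3 → ℝ) :
    pt (fun t x => -f t x) t x = -pt f t x := by
  unfold pt
  exact deriv.neg

lemma pt_mul {f g : ℝ → (Fin 3 → ℝ) → ℝ} (hf : SmoothFn f) (hg : SmoothFn g)
    (t : ℝ) (x : Fin 3 → ℝ) :
    pt (fun t x => f t x * g t x) t x = pt f t x * g t x + f t x * pt g t x := by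
  unfold pt
  exact deriv_mul (diff_t hf t x) (diff_t hg t x)

lemma pt_sum {f : Fin 3 → ℝ → (Fin 3 → ℝ) → ℝ} (hf : ∀ i, SmoothFn (f i))
    (t : ℝ) (x : Fin 3 → ℝ) :
    pt (fun t x => ∑ i, f i t x) t x = ∑ i, pt (f i) t x := by
  unfold pt
  exact deriv_fun_sum fun i _ => diff_t (hf i) t x

lemma pd_add {f g : ℝ → (Fin 3 → ℝ) → ℝ} (hf : SmoothFn f) (hg : SmoothFn g)
    (j : Fin 3) (t : ℝ) (x : Fin 3 → ℝ) :
    pd j (fun t x => f t x + g t x) t x = pd j f t x + pd j g t x := by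
  unfold pd
  rw [fderiv_fun_add (diff_x hf t x) (diff_x hg t x)]
  rfl

lemma pd_neg (f : ℝ → (Fin 3 → ℝ) → ℝ) (j : Fin 3) (t : ℝ) (x : Fin 3 → ℝ) :
    pd j (fun t x => -f t x) t x = -pd j f t x := by
  unfold pd
  rw [fderiv_fun_neg]
  rfl

lemma pd_mul {f g : ℝ → (Fin 3 → ℝ) → ℝ} (hf : SmoothFn f) (hg : SmoothFn g)
    (j : Fin 3) (t : ℝ) (x : Fin 3 → ℝ) :
    pd j (fun t x => f t x * g t x) t x = pd j f t x * g t x + f t x * pd j g t x := by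
  unfold pd
  rw [fderiv_fun_mul (diff_x hf t x) (diff_x hg t x)]
  simp only [ContinuousLinearMap.add_apply, ContinuousLinearMap.smul_apply, smul_eq_mul]
  ring

lemma pd_sum {f : Fin 3 → ℝ → (Fin 3 → ℝ) → ℝ} (hf : ∀ i, SmoothFn (f i))
    (j : Fin 3) (t : ℝ) (x : Fin 3 → ℝ) :
    pd j (fun t x => ∑ i, f i t x) t x = ∑ i, pd j (f i) t x := by
  unfold pd
  rw [fderiv_fun_sum fun i _ => diff_x (hf i) t x]
  simp

lemma Dt_add {v} {f g : ℝ → (Fin 3 → ℝ) → ℝ} (hf : SmoothFn f) (hg : SmoothFn g)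
    (t : ℝ) (x : Fin 3 → ℝ) :
    Dt v (fun t x => f t x + g t x) t x = Dt v f t x + Dt v g t x := by
  unfold Dt
  rw [pt_add hf hg]
  have h : ∀ k : Fin 3, v t x k * pd k (fun t x => f t x + g t x) t x
      = v t x k * pd k f t x + v t x k * pd k g t x := fun k => by
    rw [pd_add hf hg]; ring
  rw [Finset.sum_congr rfl fun k _ => h k, Finset.sum_add_distrib]
  ring

lemma Dt_neg {v} (f : ℝ → (Fin 3 → ℝ) → ℝ) (t : ℝ) (x : Fin 3 → ℝ) :
    Dt v (fun t x => -f t x) t x = -Dt v f t x := by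
  unfold Dt
  rw [pt_neg]
  have h : ∀ k : Fin 3, v t x k * pd k (fun t x => -f t x) t x
      = -(v t x k * pd k f t x) := fun k => by rw [pd_neg]; ring
  rw [Finset.sum_congr rfl fun k _ => h k, Finset.sum_neg_distrib]
  ring

lemma Dt_mul {v} {f g : ℝ → (Fin 3 → ℝ) → ℝ} (hf : SmoothFn f) (hg : SmoothFn g)
    (t : ℝ) (x : Fin 3 → ℝ) :
    Dt v (fun t x => f t x * g t x) t x = Dt v f t x * g t x + f t x * Dt v g t x := by
  unfold Dt
  rw [pt_mul hf hg]
  have h : ∀ k : Fin 3, v t x k * pd k (fun t x => f t x * g t x) t x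
      = v t x k * pd k f t x * g t x + f t x * (v t x k * pd k g t x) := fun k => by
    rw [pd_mul hf hg]; ring
  rw [Finset.sum_congr rfl fun k _ => h k, Finset.sum_add_distrib, ← Finset.mul_sum]
  have : ∀ k : Fin 3, v t x k * pd k f t x * g t x = v t x k * pd k f t x * g t x := fun _ => rfl
  rw [show (∑ k, v t x k * pd k f t x * g t x) = (∑ k, v t x k * pd k f t x) * g t x by
    rw [Finset.sum_mul]]
  ring

lemma Dt_sum {v} {f : Fin 3 → ℝ → (Fin 3 → ℝ) → ℝ} (hf : ∀ i, SmoothFn (f i))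
    (t : ℝ) (x : Fin 3 → ℝ) :
    Dt v (fun t x => ∑ i, f i t x) t x = ∑ i, Dt v (f i) t x := by
  unfold Dt
  rw [pt_sum hf]
  have h : ∀ k : Fin 3, v t x k * pd k (fun t x => ∑ i, f i t x) t x
      = ∑ i, v t x k * pd k (f i) t x := fun k => by
    rw [pd_sum hf]; exact Finset.mul_sum _ _ _
  rw [Finset.sum_congr rfl fun k _ => h k, Finset.sum_comm, ← Finset.sum_add_distrib]

lemma comm {v : ℝ → (Fin 3 → ℝ) → Fin 3 → ℝ} {f : ℝ → (Fin 3 → ℝ) → ℝ}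
    (hv : SmoothVec v) (hf : SmoothFn f) (j : Fin 3) (t : ℝ) (x : Fin 3 → ℝ) :
    Dt v (pd j f) t x - pd j (Dt v f) t x
      = -∑ k, pd j (fun s y => v s y k) t x * pd k f t x := by
  set F : E → ℝ := lift f with hF_def
  set q₀ : E := (t, x) with hq_def
  set W : E → E := fun q => ((1 : ℝ), fun i => v q.1 q.2 i) with hW_def
  have hF : ContDiff ℝ (⊤ : ℕ∞) F := hf
  have hF' : ContDiff ℝ (⊤ : ℕ∞) (fderiv ℝ F) := hF.fderiv_right (by simp)
  have hW : ContDiff ℝ (⊤ : ℕ∞) W := smoothV hv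
  set A := fderiv ℝ (fderiv ℝ F) q₀ with hA_def
  -- lift of pd j f
  have hliftpd : (fun q : E => pd j f q.1 q.2) = fun q => fderiv ℝ F q (ev j) := by
    funext q; exact pd_eq hf j q.1 q.2
  -- step a : Dt v (pd j f) t x = A (W q₀) (ev j)
  have ha : Dt v (pd j f) t x = A (W q₀) (ev j) := by
    have h1 := Dt_eq (smooth_pd hf j) v t x
    have h2 : fderiv ℝ (lift (pd j f)) q₀ = fderiv ℝ (fun q => fderiv ℝ F q (ev j)) q₀ := by
      congr 1
    have h3 : fderiv ℝ (fun q => fderiv ℝ F q (ev j)) q₀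
        = (fderiv ℝ F q₀).comp (0 : E →L[ℝ] E) + A.flip (ev j) := by
      rw [fderiv_clm_apply ((hF'.differentiable (by simp)) q₀) (differentiableAt_const _)]
      rw [fderiv_fun_const]
      rfl
    have h4 : ((1 : ℝ), v t x) = W q₀ := by simp [hW_def, hq_def]
    rw [h1, h4]
    show fderiv ℝ (lift (pd j f)) q₀ (W q₀) = A (W q₀) (ev j)
    rw [h2, h3]
    simp
  -- step b : pd j (Dt v f) t x = A (ev j) (W q₀) + fderiv ℝ F q₀ (fderiv ℝ W q₀ (ev j))
  have hliftDt : (fun q : E => Dt v f q.1 q.2) = fun q => fderiv ℝ F q (W q) := by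
    funext q
    have := Dt_eq hf v q.1 q.2
    simpa [hW_def] using this
  have hb : pd j (Dt v f) t x
      = A (ev j) (W q₀) + fderiv ℝ F q₀ (fderiv ℝ W q₀ (ev j)) := by
    have h1 := pd_eq (smooth_Dt hv hf) j t x
    have h2 : fderiv ℝ (lift (Dt v f)) q₀ = fderiv ℝ (fun q => fderiv ℝ F q (W q)) q₀ := by
      congr 1
    have h3 : fderiv ℝ (fun q => fderiv ℝ F q (W q)) q₀
        = (fderiv ℝ F q₀).comp (fderiv ℝ W q₀) + A.flip (W q₀) := by
      rw [fderiv_clm_apply ((hF'.differentiable (by simp)) q₀) ((hW.differentiable (by simp)) q₀)]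
    rw [h1]
    show fderiv ℝ (lift (Dt v f)) q₀ (ev j) = _
    rw [h2, h3]
    simp [add_comm]
  -- symmetry
  have hsymm : A (W q₀) (ev j) = A (ev j) (W q₀) :=
    second_derivative_symmetric (fun y => ((hF.differentiable (by simp)) y).hasFDerivAt)
      ((hF'.differentiable (by simp)) q₀).hasFDerivAt _ _
  -- compute fderiv W q₀ (ev j)
  set V : E → (Fin 3 → ℝ) := fun q => fun i => v q.1 q.2 i with hV_def
  have hVd : ∀ i, DifferentiableAt ℝ (fun q : E => v q.1 q.2 i) q₀ :=
    fun i => (((hv i).differentiable (by simp)) q₀)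
  have hVsm : ContDiff ℝ (⊤ : ℕ∞) V := contDiff_pi.2 fun i => (hv i)
  have hWfd : HasFDerivAt W ((0 : E →L[ℝ] ℝ).prod (fderiv ℝ V q₀)) q₀ :=
    HasFDerivAt.prodMk (hasFDerivAt_const (1 : ℝ) q₀) ((hVsm.differentiable (by simp)) q₀).hasFDerivAt
  have hWev : fderiv ℝ W q₀ (ev j) = ((0 : ℝ), fderiv ℝ V q₀ (ev j)) := by
    rw [hWfd.fderiv]; rfl
  have hVev : fderiv ℝ V q₀ (ev j) = fun k => pd j (fun s y => v s y k) t x := by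
    rw [fderiv_pi hVd]
    funext k
    show fderiv ℝ (fun q : E => v q.1 q.2 k) q₀ (ev j) = _
    rw [pd_eq (hv k) j t x]
    rfl
  -- final evaluation
  have hfin : fderiv ℝ F q₀ ((0 : ℝ), fderiv ℝ V q₀ (ev j))
      = ∑ k, pd j (fun s y => v s y k) t x * pd k f t x := by
    rw [decomp, map_sum]
    refine Finset.sum_congr rfl fun k _ => ?_
    rw [map_smul, hVev, pd_eq hf k t x, smul_eq_mul]
  rw [ha, hb, hsymm, hWev, hfin]
  ring

def Vi (v : ℝ → (Fin 3 → ℝ) → Fin 3 → ℝ) (i : Fin 3) : ℝ → (Fin 3 → ℝ) → ℝ :=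
  fun s y => v s y i

def G (v : ℝ → (Fin 3 → ℝ) → Fin 3 → ℝ) (i : Fin 3) : ℝ → (Fin 3 → ℝ) → ℝ :=
  Dt v (Vi v i)

lemma G_eq (v : ℝ → (Fin 3 → ℝ) → Fin 3 → ℝ) (i : Fin 3) : Dt v (Vi v i) = G v i := rfl

theorem main' (v : ℝ → (Fin 3 → ℝ) → Fin 3 → ℝ) (p : ℝ → (Fin 3 → ℝ) → ℝ)
    (hv : SmoothVec v) (hp : SmoothFn p)
    (hE : ∀ k : Fin 3, pd k p = fun s y => -(G v k s y)) (j : Fin 3) (t : ℝ)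
    (x : Fin 3 → ℝ) :
    Dt v (Dt v (pd j p)) t x - pd j (Dt v (Dt v p)) t x
      = ∑ i, (2 * pd j (Vi v i) t x * Dt v (G v i) t x
          + pd j (G v i) t x * G v i t x) := by
  have hVi : ∀ i, SmoothFn (Vi v i) := fun i => hv i
  have hG : ∀ i, SmoothFn (G v i) := fun i => smooth_Dt hv (hVi i)
  have hDtG : ∀ i, SmoothFn (Dt v (G v i)) := fun i => smooth_Dt hv (hG i)
  have hpdV : ∀ (k i : Fin 3), SmoothFn (pd k (Vi v i)) := fun k i => smooth_pd (hVi i) k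
  have hDtp : SmoothFn (Dt v p) := smooth_Dt hv hp
  have comm' : ∀ (f : ℝ → (Fin 3 → ℝ) → ℝ), SmoothFn f →
      ∀ (k : Fin 3) (s : ℝ) (y : Fin 3 → ℝ),
      Dt v (pd k f) s y - pd k (Dt v f) s y
        = -∑ m, pd k (Vi v m) s y * pd m f s y :=
    fun f hf k s y => comm hv hf k s y
  have E1 : Dt v (Dt v (pd j p)) t x = -(Dt v (Dt v (G v j)) t x) := by
    rw [hE j]
    have h1 : Dt v (fun s y => -(G v j s y)) = fun s y => -(Dt v (G v j) s y) :=
      funext fun s => funext fun y => Dt_neg _ s y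
    rw [h1]
    exact Dt_neg _ t x
  have hpdDtp : ∀ k : Fin 3, pd k (Dt v p)
      = fun s y => -(Dt v (G v k) s y + ∑ m, pd k (Vi v m) s y * G v m s y) := by
    intro k
    funext s y
    have hc := comm' p hp k s y
    have h1 : Dt v (pd k p) s y = -(Dt v (G v k) s y) := by
      rw [hE k]; exact Dt_neg _ s y
    have h3 : ∑ m, pd k (Vi v m) s y * pd m p s y
        = -∑ m, pd k (Vi v m) s y * G v m s y := by
      rw [← Finset.sum_neg_distrib]
      refine Finset.sum_congr rfl fun m _ => ?_
      rw [hE m]; ring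
    rw [h1, h3] at hc
    linarith
  have hBsm : SmoothFn (fun s y => ∑ m, pd j (Vi v m) s y * G v m s y) :=
    smooth_sum fun m => smooth_mul (hpdV j m) (hG m)
  have hDtpd : Dt v (pd j (Dt v p)) t x
      = -(Dt v (Dt v (G v j)) t x
          + ∑ m, (Dt v (pd j (Vi v m)) t x * G v m t x
              + pd j (Vi v m) t x * Dt v (G v m) t x)) := by
    rw [hpdDtp j]
    have h1 : Dt v (fun s y => -(Dt v (G v j) s y + ∑ m, pd j (Vi v m) s y * G v m s y)) t x
        = -(Dt v (fun s y => Dt v (G v j) s y + ∑ m, pd j (Vi v m) s y * G v m s y) t x) :=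
      Dt_neg _ t x
    rw [h1, Dt_add (hDtG j) hBsm t x,
      Dt_sum (fun m => smooth_mul (hpdV j m) (hG m)) t x]
    congr 2
    refine Finset.sum_congr rfl fun m _ => ?_
    exact Dt_mul (hpdV j m) (hG m) t x
  have hDtpdV : ∀ m : Fin 3, Dt v (pd j (Vi v m)) t x
      = pd j (G v m) t x - ∑ r, pd j (Vi v r) t x * pd r (Vi v m) t x := by
    intro m
    have hc := comm' (Vi v m) (hVi m) j t x
    rw [G_eq] at hc
    linarith
  have hpdkDtp : ∀ k : Fin 3, pd k (Dt v p) t x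
      = -(Dt v (G v k) t x + ∑ m, pd k (Vi v m) t x * G v m t x) :=
    fun k => by rw [hpdDtp k]
  have hc2 := comm' (Dt v p) hDtp j t x
  have E2 : pd j (Dt v (Dt v p)) t x
      = Dt v (pd j (Dt v p)) t x + ∑ k, pd j (Vi v k) t x * pd k (Dt v p) t x := by
    linarith
  rw [E1, E2, hDtpd]
  simp only [Fin.sum_univ_three]
  rw [hDtpdV 0, hDtpdV 1, hDtpdV 2, hpdkDtp 0, hpdkDtp 1, hpdkDtp 2]
  simp only [Fin.sum_univ_three]
  ring

theorem stmt_6' (v : ℝ → (Fin 3 → ℝ) → Fin 3 → ℝ) (p : ℝ → (Fin 3 → ℝ) → ℝ)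
    (hv : SmoothVec v) (hp : SmoothFn p)
    (hEuler : ∀ (i : Fin 3) (t : ℝ) (x : Fin 3 → ℝ),
      Dt v (fun s y => v s y i) t x + pd i p t x = 0) :
    ∀ (j : Fin 3) (t : ℝ) (x : Fin 3 → ℝ),
      Dt v (Dt v (pd j p)) t x - pd j (Dt v (Dt v p)) t x
        = ∑ i, (2 * pd j (fun s y => v s y i) t x
              * Dt v (Dt v (fun s y => v s y i)) t x
            + pd j (Dt v (fun s y => v s y i)) t x
              * Dt v (fun s y => v s y i) t x) := by
  intro j t x
  have hE : ∀ k : Fin 3, pd k p = fun s y => -(G v k s y) := by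
    intro k
    funext s y
    have h := hEuler k s y
    change G v k s y + pd k p s y = 0 at h
    linarith
  exact main' v p hv hp hE j t x

end Aux

/-- Second-order commutator of the material derivative with a spatial partial
applied to the pressure:
`[D_t², ∂_j] p = Σ_i (2 ∂_j v^i (D_t² v)^i + ∂_j (D_t v)^i (D_t v)^i)`. -/
theorem stmt_6 (v : ℝ → (Fin 3 → ℝ) → Fin 3 → ℝ) (p : ℝ → (Fin 3 → ℝ) → ℝ)
    (hv : SmoothVec v) (hp : SmoothFn p)
    (hEuler : ∀ (i : Fin 3) (t : ℝ) (x : Fin 3 → ℝ),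
      Dt v (fun s y => v s y i) t x + pd i p t x = 0) :
    ∀ (j : Fin 3) (t : ℝ) (x : Fin 3 → ℝ),
      Dt v (Dt v (pd j p)) t x - pd j (Dt v (Dt v p)) t x
        = ∑ i, (2 * pd j (fun s y => v s y i) t x
              * Dt v (Dt v (fun s y => v s y i)) t x
            + pd j (Dt v (fun s y => v s y i)) t x
              * Dt v (fun s y => v s y i) t x) := by
  intro j t x
  have hE : ∀ k : Fin 3, pd k p = fun s y => -(Aux.G v k s y) := by
    intro k
    funext s y
    have h := hEuler k s y
    change Aux.G v k s y + pd k p s y = 0 at h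
    linarith
  exact Aux.main' v p hv hp hE j t x
end
end

section
/- Let v : ℝ × ℝ³ → ℝ³ be a smooth time-dependent vector field satisfying the divergence-free condition Σ_{i=1}^{3} ∂_i v^i = 0 at every point of ℝ × ℝ³. Then at every point: div(D_t² v) = 3 Σ_{i,j=1}^{3} ∂_i v^j · ∂_j (D_t v)^i − 2 Σ_{i,j,k=1}^{3} ∂_i v^j · ∂_j v^k · ∂_k v^i, where D_t² v := D_t(D_t v) and div w := Σ_{i=1}^{3} ∂_i w^i. -/
noncomputable section

abbrev E3 := ℝ × (Fin 3 → ℝ)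
def FJ (f : ℝ → (Fin 3 → ℝ) → ℝ) : E3 → ℝ := fun p => f p.1 p.2
def Dv (u : E3) (f : ℝ → (Fin 3 → ℝ) → ℝ) : ℝ → (Fin 3 → ℝ) → ℝ :=
  fun t x => fderiv ℝ (FJ f) (t, x) u

lemma SmoothFn.dv {f} (hf : SmoothFn f) (u : E3) : SmoothFn (Dv u f) := by
  have h : ContDiff ℝ (⊤ : ℕ∞) (fun p : E3 => fderiv ℝ (FJ f) p u) :=
    (hf.fderiv_right ((by simp))).clm_apply contDiff_const
  exact h

lemma pd_eq {f} (hf : SmoothFn f) (i : Fin 3) : pd i f = Dv (0, Pi.single i 1) f := by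
  funext t x
  have h1 : HasFDerivAt (FJ f) (fderiv ℝ (FJ f) (t, x)) (t, x) :=
    ((hf.differentiable (by simp)) (t, x)).hasFDerivAt
  have h2 := h1.comp x (hasFDerivAt_prodMk_right t x)
  have h3 : fderiv ℝ (f t) x = (fderiv ℝ (FJ f) (t, x)).comp (ContinuousLinearMap.inr ℝ ℝ (Fin 3 → ℝ)) :=
    h2.fderiv
  simp [pd, Dv, h3]

lemma pt_eq {f} (hf : SmoothFn f) : pt f = Dv (1, 0) f := by
  funext t x
  have h1 : HasFDerivAt (FJ f) (fderiv ℝ (FJ f) (t, x)) (t, x) :=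
    ((hf.differentiable (by simp)) (t, x)).hasFDerivAt
  have h2 := (h1.comp t (hasFDerivAt_prodMk_left t x)).hasDerivAt
  have h3 : deriv (fun s => f s x) t = (fderiv ℝ (FJ f) (t, x)) ((ContinuousLinearMap.inl ℝ ℝ (Fin 3 → ℝ)) 1) := h2.deriv
  simpa [pt, Dv] using h3

lemma dv_comm {f} (hf : SmoothFn f) (u w : E3) : Dv u (Dv w f) = Dv w (Dv u f) := by
  funext t x
  set G := fderiv ℝ (FJ f) with hG
  have hGd : Differentiable ℝ G := (hf.fderiv_right (m := (⊤ : ℕ∞)) (by simp)).differentiable (by simp)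
  have hG2 : HasFDerivAt G (fderiv ℝ G (t, x)) (t, x) := (hGd (t, x)).hasFDerivAt
  have key : ∀ a : E3, fderiv ℝ (fun p : E3 => G p a) (t, x)
      = (fderiv ℝ G (t, x)).flip a := by
    intro a
    have := fderiv_clm_apply (c := G) (u := fun _ => a) (hGd (t, x)) (differentiableAt_const a)
    simp [this]
  have hs := second_derivative_symmetric (f := FJ f) (f' := G)
    (fun y => ((hf.differentiable (by simp)) y).hasFDerivAt) hG2 u w
  have e1 : Dv u (Dv w f) t x = fderiv ℝ (fun p : E3 => G p w) (t, x) u := rfl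
  have e2 : Dv w (Dv u f) t x = fderiv ℝ (fun p : E3 => G p u) (t, x) w := rfl
  rw [e1, e2, key, key]
  simpa using hs

lemma SmoothFn.diffX {f} (hf : SmoothFn f) (t : ℝ) (x : Fin 3 → ℝ) :
    DifferentiableAt ℝ (f t) x := by
  have : DifferentiableAt ℝ (fun y => f t y) x :=
    ((hf.differentiable (by simp)).comp (differentiable_const t |>.prodMk differentiable_id)).differentiableAt
  exact this

lemma SmoothFn.diffT {f} (hf : SmoothFn f) (t : ℝ) (x : Fin 3 → ℝ) :
    DifferentiableAt ℝ (fun s => f s x) t :=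
  ((hf.differentiable (by simp)).comp (differentiable_id.prodMk (differentiable_const x))).differentiableAt

lemma SmoothFn.add {f g} (hf : SmoothFn f) (hg : SmoothFn g) :
    SmoothFn (fun t x => f t x + g t x) := ContDiff.add hf hg
lemma SmoothFn.mul {f g} (hf : SmoothFn f) (hg : SmoothFn g) :
    SmoothFn (fun t x => f t x * g t x) := ContDiff.mul hf hg
lemma SmoothFn.sum {F : Fin 3 → ℝ → (Fin 3 → ℝ) → ℝ} (hF : ∀ k, SmoothFn (F k)) :
    SmoothFn (fun t x => ∑ k, F k t x) := by
  have : ContDiff ℝ (⊤ : ℕ∞) (fun p : ℝ × (Fin 3 → ℝ) => ∑ k : Fin 3, F k p.1 p.2) :=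
    ContDiff.sum fun k _ => hF k
  exact this

lemma pd_add {f g} (hf : SmoothFn f) (hg : SmoothFn g) (i : Fin 3) (t x) :
    pd i (fun t x => f t x + g t x) t x = pd i f t x + pd i g t x := by
  simp only [pd]
  rw [fderiv_fun_add (hf.diffX t x) (hg.diffX t x)]
  simp

lemma pd_mul {f g} (hf : SmoothFn f) (hg : SmoothFn g) (i : Fin 3) (t x) :
    pd i (fun t x => f t x * g t x) t x = f t x * pd i g t x + g t x * pd i f t x := by
  simp only [pd]
  rw [fderiv_fun_mul (hf.diffX t x) (hg.diffX t x)]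
  simp

lemma pd_sum {F : Fin 3 → ℝ → (Fin 3 → ℝ) → ℝ} (hF : ∀ k, SmoothFn (F k)) (i : Fin 3) (t x) :
    pd i (fun t x => ∑ k, F k t x) t x = ∑ k, pd i (F k) t x := by
  simp only [pd]
  rw [fderiv_fun_sum (fun k _ => (hF k).diffX t x)]
  simp

lemma pt_add {f g} (hf : SmoothFn f) (hg : SmoothFn g) (t x) :
    pt (fun t x => f t x + g t x) t x = pt f t x + pt g t x := by
  simp only [pt]
  exact deriv_add (hf.diffT t x) (hg.diffT t x)

lemma pt_mul {f g} (hf : SmoothFn f) (hg : SmoothFn g) (t x) :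
    pt (fun t x => f t x * g t x) t x = f t x * pt g t x + g t x * pt f t x := by
  simp only [pt]
  rw [deriv_fun_mul (hf.diffT t x) (hg.diffT t x)]; ring

lemma pt_sum {F : Fin 3 → ℝ → (Fin 3 → ℝ) → ℝ} (hF : ∀ k, SmoothFn (F k)) (t x) :
    pt (fun t x => ∑ k, F k t x) t x = ∑ k, pt (F k) t x := by
  simp only [pt]
  exact deriv_fun_sum (fun k _ => (hF k).diffT t x)

lemma pd_zero (i : Fin 3) : pd i (fun _ _ => (0:ℝ)) = fun _ _ => 0 := by
  funext t x; simp [pd]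
lemma pt_zero : pt (fun _ _ => (0:ℝ)) = fun _ _ => 0 := by
  funext t x; simp [pt]


lemma SmoothFn.dv' {f} (hf : SmoothFn f) (i : Fin 3) : SmoothFn (pd i f) := by
  rw [pd_eq hf i]; exact hf.dv _

lemma SmoothFn.pt' {f} (hf : SmoothFn f) : SmoothFn (pt f) := by
  rw [pt_eq hf]; exact hf.dv _

lemma pd_pt {f} (hf : SmoothFn f) (i : Fin 3) : pd i (pt f) = pt (pd i f) := by
  rw [pt_eq hf, pd_eq (hf.dv _) i, pd_eq hf i, pt_eq (hf.dv _), dv_comm hf]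

lemma pd_pd {f} (hf : SmoothFn f) (i j : Fin 3) : pd i (pd j f) = pd j (pd i f) := by
  rw [pd_eq hf j, pd_eq (hf.dv _) i, pd_eq hf i, pd_eq (hf.dv _) j, dv_comm hf]

variable {v : ℝ → (Fin 3 → ℝ) → Fin 3 → ℝ}

lemma SmoothFn.dt (hv : SmoothVec v) {f} (hf : SmoothFn f) : SmoothFn (Dt v f) := by
  show SmoothFn (fun t x => pt f t x + ∑ k, v t x k * pd k f t x)
  exact (hf.pt').add (SmoothFn.sum fun k => (hv k).mul (hf.dv' k))

lemma dt_zero : Dt v (fun _ _ => (0:ℝ)) = fun _ _ => 0 := by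
  funext t x; simp [Dt, pt_zero, pd_zero]

lemma dt_sum {F : Fin 3 → ℝ → (Fin 3 → ℝ) → ℝ} (hF : ∀ k, SmoothFn (F k)) (t : ℝ) (x : Fin 3 → ℝ) :
    Dt v (fun t x => ∑ k, F k t x) t x = ∑ k, Dt v (F k) t x := by
  simp only [Dt, pt_sum hF, pd_sum hF, Finset.mul_sum, Finset.sum_add_distrib]
  rw [Finset.sum_comm]

lemma dt_mul {f g} (hf : SmoothFn f) (hg : SmoothFn g) (t : ℝ) (x : Fin 3 → ℝ) :
    Dt v (fun t x => f t x * g t x) t x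
      = f t x * Dt v g t x + g t x * Dt v f t x := by
  simp only [Dt, pt_mul hf hg, pd_mul hf hg, mul_add, Finset.sum_add_distrib,
    Finset.mul_sum]
  simp only [mul_left_comm]
  ring


lemma pd_dt (hv : SmoothVec v) {f} (hf : SmoothFn f) (i : Fin 3) (t : ℝ) (x : Fin 3 → ℝ) :
    pd i (Dt v f) t x
      = Dt v (pd i f) t x + ∑ j, pd i (fun s y => v s y j) t x * pd j f t x := by
  have h1 : pd i (Dt v f) t x
      = pd i (pt f) t x + pd i (fun t x => ∑ k, v t x k * pd k f t x) t x := by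
    exact pd_add hf.pt' (SmoothFn.sum fun k => (hv k).mul (hf.dv' k)) i t x
  rw [h1, pd_pt hf i,
    pd_sum (fun k => (hv k).mul (hf.dv' k)) i t x]
  have h2 : ∀ k, pd i (fun t x => v t x k * pd k f t x) t x
      = v t x k * pd k (pd i f) t x + pd k f t x * pd i (fun s y => v s y k) t x := by
    intro k
    rw [pd_mul (hv k) (hf.dv' k) i t x, pd_pd hf i k]
  simp only [h2]
  simp only [Dt, Finset.sum_add_distrib]
  simp only [mul_comm]
  rw [add_assoc]

/-- For a divergence-free vector field `v`,
`div(D_t² v) = 3 Σ_{i,j} ∂_i v^j ∂_j (D_t v)^i - 2 Σ_{i,j,k} ∂_i v^j ∂_j v^k ∂_k v^i`. -/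
theorem stmt_9 (v : ℝ → (Fin 3 → ℝ) → Fin 3 → ℝ)
    (hv : SmoothVec v)
    (hdiv : ∀ (t : ℝ) (x : Fin 3 → ℝ), ∑ i, pd i (fun s y => v s y i) t x = 0) :
    ∀ (t : ℝ) (x : Fin 3 → ℝ),
      ∑ i, pd i (Dt v (Dt v (fun s y => v s y i))) t x
        = 3 * ∑ i, ∑ j, pd i (fun s y => v s y j) t x
              * pd j (Dt v (fun s y => v s y i)) t x
          - 2 * ∑ i, ∑ j, ∑ k, pd i (fun s y => v s y j) t x
              * pd j (fun s y => v s y k) t x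
              * pd k (fun s y => v s y i) t x := by

  have hW : ∀ i : Fin 3, SmoothFn (Dt v (fun s y => v s y i)) :=
    fun i => SmoothFn.dt hv (hv i)
  have divW : ∀ (t : ℝ) (x : Fin 3 → ℝ),
      (∑ i, pd i (Dt v (fun s y => v s y i)) t x)
      = ∑ i, ∑ j, pd i (fun s y => v s y j) t x * pd j (fun s y => v s y i) t x := by
    intro t x
    have h1 : ∀ i : Fin 3, pd i (Dt v (fun s y => v s y i)) t x
        = Dt v (pd i (fun s y => v s y i)) t x
          + ∑ j, pd i (fun s y => v s y j) t x * pd j (fun s y => v s y i) t x :=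
      fun i => pd_dt hv (hv i) i t x
    simp only [h1, Finset.sum_add_distrib]
    have h2 : (∑ i : Fin 3, Dt v (pd i (fun s y => v s y i)) t x)
        = Dt v (fun t x => ∑ i, pd i (fun s y => v s y i) t x) t x :=
      (dt_sum (fun i => (hv i).dv' i) t x).symm
    have h3 : (fun t x => ∑ i : Fin 3, pd i (fun s y => v s y i) t x)
        = fun _ _ => (0:ℝ) := by
      funext t x; exact hdiv t x
    rw [h2, h3, dt_zero]
    simp
  intro t x
  have comm : ∀ i j : Fin 3, Dt v (pd i (fun s y => v s y j)) t x
      = pd i (Dt v (fun s y => v s y j)) t x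
        - ∑ k, pd i (fun s y => v s y k) t x * pd k (fun s y => v s y j) t x := by
    intro i j
    have := pd_dt hv (hv j) i t x
    linarith
  have l1 : ∀ i : Fin 3, pd i (Dt v (Dt v (fun s y => v s y i))) t x
      = Dt v (pd i (Dt v (fun s y => v s y i))) t x
        + ∑ j, pd i (fun s y => v s y j) t x
            * pd j (Dt v (fun s y => v s y i)) t x :=
    fun i => pd_dt hv (hW i) i t x
  have l2 : (∑ i : Fin 3, Dt v (pd i (Dt v (fun s y => v s y i))) t x)
      = Dt v (fun t x => ∑ i, pd i (Dt v (fun s y => v s y i)) t x) t x :=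
    (dt_sum (fun i => (hW i).dv' i) t x).symm
  have l3 : (fun t x => ∑ i : Fin 3, pd i (Dt v (fun s y => v s y i)) t x)
      = fun t x => ∑ i : Fin 3, ∑ j : Fin 3,
          pd i (fun s y => v s y j) t x * pd j (fun s y => v s y i) t x := by
    funext t x; exact divW t x
  have l4 : Dt v (fun t x => ∑ i : Fin 3, ∑ j : Fin 3,
        pd i (fun s y => v s y j) t x * pd j (fun s y => v s y i) t x) t x
      = ∑ i : Fin 3, ∑ j : Fin 3,
          (pd i (fun s y => v s y j) t x * Dt v (pd j (fun s y => v s y i)) t x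
           + pd j (fun s y => v s y i) t x * Dt v (pd i (fun s y => v s y j)) t x) := by
    rw [dt_sum (fun i => SmoothFn.sum (fun j => ((hv j).dv' i).mul ((hv i).dv' j)))]
    refine Finset.sum_congr rfl (fun i _ => ?_)
    rw [dt_sum (fun j => ((hv j).dv' i).mul ((hv i).dv' j))]
    refine Finset.sum_congr rfl (fun j _ => ?_)
    exact dt_mul ((hv j).dv' i) ((hv i).dv' j) t x
  simp only [l1, Finset.sum_add_distrib]
  rw [l2, l3, l4]
  simp only [comm]
  simp only [Fin.sum_univ_three]
  ring
end
end

section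
/- Let v : ℝ × ℝ³ → ℝ³ be a smooth time-dependent vector field satisfying the divergence-free condition Σ_{i=1}^{3} ∂_i v^i = 0 at every point of ℝ × ℝ³. Then at every point: div(D_t³ v) = 4 Σ_{i,j=1}^{3} ∂_i v^j · ∂_j (D_t² v)^i + 3 Σ_{i,j=1}^{3} ∂_i (D_t v)^j · ∂_j (D_t v)^i − 12 Σ_{i,j,l=1}^{3} ∂_i v^l · ∂_l v^j · ∂_j (D_t v)^i + 6 Σ_{i,j,k,l=1}^{3} ∂_i v^l · ∂_l v^j · ∂_j v^k · ∂_k v^i, where D_t² v := D_t(D_t v), D_t³ v := D_t(D_t² v), and div w := Σ_{i=1}^{3} ∂_i w^i. -/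
noncomputable section

-- helpers
variable {f g : ℝ → (Fin 3 → ℝ) → ℝ} {v : ℝ → (Fin 3 → ℝ) → Fin 3 → ℝ}

theorem SmoothFn.dAt (hf : SmoothFn f) (p : ℝ × (Fin 3 → ℝ)) :
    DifferentiableAt ℝ (fun q : ℝ × (Fin 3 → ℝ) => f q.1 q.2) p :=
  (hf.differentiable (by simp)).differentiableAt

theorem pd_eq_s10 (hf : SmoothFn f) (i : Fin 3) (t : ℝ) (x : Fin 3 → ℝ) :
    pd i f t x
      = fderiv ℝ (fun p : ℝ × (Fin 3 → ℝ) => f p.1 p.2) (t, x) (0, Pi.single i 1) := by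
  have h1 : HasFDerivAt (fun y : Fin 3 → ℝ => (t, y))
      (ContinuousLinearMap.inr ℝ ℝ (Fin 3 → ℝ)) x := hasFDerivAt_prodMk_right t x
  have h2 : HasFDerivAt (f t)
      ((fderiv ℝ (fun p : ℝ × (Fin 3 → ℝ) => f p.1 p.2) (t, x)).comp
        (ContinuousLinearMap.inr ℝ ℝ (Fin 3 → ℝ))) x :=
    ((hf.dAt (t, x)).hasFDerivAt.comp x h1 :)
  rw [pd, h2.fderiv]
  simp

theorem pt_eq_s10 (hf : SmoothFn f) (t : ℝ) (x : Fin 3 → ℝ) :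
    pt f t x
      = fderiv ℝ (fun p : ℝ × (Fin 3 → ℝ) => f p.1 p.2) (t, x) (1, 0) := by
  have h1 : HasDerivAt (fun s : ℝ => (s, x)) ((1 : ℝ), (0 : Fin 3 → ℝ)) t :=
    (hasDerivAt_id t).prodMk (hasDerivAt_const t x)
  have h2 : HasDerivAt (fun s => f s x)
      (fderiv ℝ (fun p : ℝ × (Fin 3 → ℝ) => f p.1 p.2) (t, x) (1, 0)) t :=
    ((hf.dAt (t, x)).hasFDerivAt.comp_hasDerivAt t h1 :)
  rw [pt, h2.deriv]

theorem dir_decomp (y : Fin 3 → ℝ) :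
    ((0 : ℝ), y) = ∑ k, y k • (((0 : ℝ), Pi.single k (1 : ℝ)) : ℝ × (Fin 3 → ℝ)) := by
  rw [Prod.ext_iff]
  constructor
  · simp [Prod.fst_sum]
  · simp only [Prod.snd_sum, Prod.smul_mk, smul_zero]
    funext j
    simp [Finset.sum_apply, Pi.single_apply]

theorem fderiv_dir (hf : SmoothFn f) (t : ℝ) (x : Fin 3 → ℝ) (y : Fin 3 → ℝ) :
    fderiv ℝ (fun p : ℝ × (Fin 3 → ℝ) => f p.1 p.2) (t, x) ((0 : ℝ), y)
      = ∑ k, y k * pd k f t x := by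
  rw [dir_decomp y, map_sum]
  exact Finset.sum_congr rfl fun k _ => by rw [map_smul, smul_eq_mul, pd_eq_s10 hf]

theorem Dt_eq (hf : SmoothFn f) (t : ℝ) (x : Fin 3 → ℝ) :
    Dt v f t x
      = fderiv ℝ (fun p : ℝ × (Fin 3 → ℝ) => f p.1 p.2) (t, x) (1, v t x) := by
  have h : ((1 : ℝ), v t x) = ((1 : ℝ), (0 : Fin 3 → ℝ)) + ((0 : ℝ), v t x) := by
    simp
  rw [Dt, pt_eq_s10 hf, h, map_add, fderiv_dir hf]

theorem smoothFn_pd (i : Fin 3) (hf : SmoothFn f) : SmoothFn (pd i f) := by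
  have : (fun p : ℝ × (Fin 3 → ℝ) => pd i f p.1 p.2)
      = fun p => fderiv ℝ (fun q : ℝ × (Fin 3 → ℝ) => f q.1 q.2) p (0, Pi.single i 1) :=
    funext fun p => pd_eq_s10 hf i p.1 p.2
  rw [SmoothFn, this]
  exact (hf.fderiv_right (by simp)).clm_apply contDiff_const

theorem smoothFn_Dt (hv : SmoothVec v) (hf : SmoothFn f) : SmoothFn (Dt v f) := by
  have : (fun p : ℝ × (Fin 3 → ℝ) => Dt v f p.1 p.2)
      = fun p => fderiv ℝ (fun q : ℝ × (Fin 3 → ℝ) => f q.1 q.2) p (1, v p.1 p.2) :=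
    funext fun p => Dt_eq hf p.1 p.2
  rw [SmoothFn, this]
  exact (hf.fderiv_right (by simp)).clm_apply
    (contDiff_const.prodMk (contDiff_pi.mpr fun k => hv k))

theorem smoothFn_mul (hf : SmoothFn f) (hg : SmoothFn g) :
    SmoothFn (fun s y => f s y * g s y) := hf.mul hg

theorem smoothFn_add (hf : SmoothFn f) (hg : SmoothFn g) :
    SmoothFn (fun s y => f s y + g s y) := hf.add hg

theorem smoothFn_sum3 {h : Fin 3 → ℝ → (Fin 3 → ℝ) → ℝ} (hh : ∀ i, SmoothFn (h i)) :
    SmoothFn (fun s y => ∑ i, h i s y) :=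
  ContDiff.sum fun i _ => hh i

theorem Dt_mul_fun (hf : SmoothFn f) (hg : SmoothFn g) :
    Dt v (fun s y => f s y * g s y)
      = fun t x => Dt v f t x * g t x + f t x * Dt v g t x := by
  funext t x
  rw [Dt_eq (smoothFn_mul hf hg), Dt_eq hf, Dt_eq hg]
  have : fderiv ℝ (fun p : ℝ × (Fin 3 → ℝ) => f p.1 p.2 * g p.1 p.2) (t, x)
      = f (t, x).1 (t, x).2 • fderiv ℝ (fun p : ℝ × (Fin 3 → ℝ) => g p.1 p.2) (t, x)
        + g (t, x).1 (t, x).2 • fderiv ℝ (fun p : ℝ × (Fin 3 → ℝ) => f p.1 p.2) (t, x) :=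
    fderiv_mul (hf.dAt (t, x)) (hg.dAt (t, x))
  rw [show (fun p : ℝ × (Fin 3 → ℝ) => (fun s y => f s y * g s y) p.1 p.2)
      = fun p : ℝ × (Fin 3 → ℝ) => f p.1 p.2 * g p.1 p.2 from rfl, this]
  simp only [ContinuousLinearMap.add_apply, ContinuousLinearMap.smul_apply, smul_eq_mul]
  ring

theorem Dt_add_fun (hf : SmoothFn f) (hg : SmoothFn g) :
    Dt v (fun s y => f s y + g s y)
      = fun t x => Dt v f t x + Dt v g t x := by
  funext t x
  rw [Dt_eq (smoothFn_add hf hg), Dt_eq hf, Dt_eq hg]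
  have : fderiv ℝ (fun p : ℝ × (Fin 3 → ℝ) => f p.1 p.2 + g p.1 p.2) (t, x)
      = fderiv ℝ (fun p : ℝ × (Fin 3 → ℝ) => f p.1 p.2) (t, x)
        + fderiv ℝ (fun p : ℝ × (Fin 3 → ℝ) => g p.1 p.2) (t, x) :=
    fderiv_add (hf.dAt (t, x)) (hg.dAt (t, x))
  rw [show (fun p : ℝ × (Fin 3 → ℝ) => (fun s y => f s y + g s y) p.1 p.2)
      = fun p : ℝ × (Fin 3 → ℝ) => f p.1 p.2 + g p.1 p.2 from rfl, this]
  simp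

theorem Dt_sum3 {h : Fin 3 → ℝ → (Fin 3 → ℝ) → ℝ} (hh : ∀ i, SmoothFn (h i))
    (t : ℝ) (x : Fin 3 → ℝ) :
    Dt v (fun s y => ∑ i, h i s y) t x = ∑ i, Dt v (h i) t x := by
  rw [Dt_eq (smoothFn_sum3 hh)]
  have : fderiv ℝ (fun p : ℝ × (Fin 3 → ℝ) => ∑ i, h i p.1 p.2) (t, x)
      = ∑ i, fderiv ℝ (fun p : ℝ × (Fin 3 → ℝ) => h i p.1 p.2) (t, x) :=
    fderiv_fun_sum fun i _ => (hh i).dAt (t, x)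
  rw [show (fun p : ℝ × (Fin 3 → ℝ) => (fun s y => ∑ i, h i s y) p.1 p.2)
      = fun p : ℝ × (Fin 3 → ℝ) => ∑ i, h i p.1 p.2 from rfl, this]
  rw [ContinuousLinearMap.sum_apply]
  exact Finset.sum_congr rfl fun i _ => (Dt_eq (hh i) t x).symm

theorem Dt_sum3_fun {h : Fin 3 → ℝ → (Fin 3 → ℝ) → ℝ} (hh : ∀ i, SmoothFn (h i)) :
    Dt v (fun s y => ∑ i, h i s y) = fun t x => ∑ i, Dt v (h i) t x :=
  funext fun t => funext fun x => Dt_sum3 hh t x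

theorem Dt_zero_fun : Dt v (fun _ _ => (0 : ℝ)) = fun _ _ => (0 : ℝ) := by
  funext t x
  simp [Dt, pt, pd]

theorem pd_Dt_fun (hv : SmoothVec v) (hf : SmoothFn f) (i : Fin 3) :
    pd i (Dt v f)
      = fun t x => Dt v (pd i f) t x
          + ∑ k, pd i (fun s y => v s y k) t x * pd k f t x := by
  funext t x
  set F := fun p : ℝ × (Fin 3 → ℝ) => f p.1 p.2 with hFdef
  set V := fun p : ℝ × (Fin 3 → ℝ) => v p.1 p.2 with hVdef
  have hFc : ContDiff ℝ (⊤ : ℕ∞) F := hf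
  have hVc : ContDiff ℝ (⊤ : ℕ∞) V := contDiff_pi.mpr fun k => hv k
  have hf1 : ∀ q, HasFDerivAt F (fderiv ℝ F q) q := fun q =>
    ((hFc.differentiable (by simp)) q).hasFDerivAt
  have hf2 : HasFDerivAt (fderiv ℝ F) (fderiv ℝ (fderiv ℝ F) (t, x)) (t, x) :=
    (((hFc.fderiv_right (m := (⊤ : ℕ∞)) (by simp)).differentiable (by simp)) (t, x)).hasFDerivAt
  have hsymm := second_derivative_symmetric hf1 hf2
  have hVp : HasFDerivAt V (fderiv ℝ V (t, x)) (t, x) :=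
    ((hVc.differentiable (by simp)) (t, x)).hasFDerivAt
  have hG : (fun p : ℝ × (Fin 3 → ℝ) => Dt v f p.1 p.2)
      = fun p => fderiv ℝ F p (1, V p) := funext fun p => Dt_eq hf p.1 p.2
  have hcu : HasFDerivAt (fun p : ℝ × (Fin 3 → ℝ) => ((1 : ℝ), V p))
      (ContinuousLinearMap.prod 0 (fderiv ℝ V (t, x))) (t, x) :=
    (hasFDerivAt_const (1 : ℝ) (t, x)).prodMk hVp
  have hGd := hf2.clm_apply hcu
  have hL : pd i (Dt v f) t x
      = fderiv ℝ F (t, x) ((0 : ℝ), fderiv ℝ V (t, x) (0, Pi.single i 1))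
        + fderiv ℝ (fderiv ℝ F) (t, x) ((0 : ℝ), Pi.single i 1) ((1 : ℝ), V (t, x)) := by
    rw [pd_eq_s10 (smoothFn_Dt hv hf) i t x, hG, hGd.fderiv]
    simp [ContinuousLinearMap.add_apply, ContinuousLinearMap.comp_apply,
      ContinuousLinearMap.flip_apply, ContinuousLinearMap.prod_apply]
  have hyk : ∀ k, (fderiv ℝ V (t, x)) ((0 : ℝ), Pi.single i 1) k
      = pd i (fun s y => v s y k) t x := by
    intro k
    have hpi : fderiv ℝ V (t, x)
        = ContinuousLinearMap.pi
            (fun k => fderiv ℝ (fun p : ℝ × (Fin 3 → ℝ) => v p.1 p.2 k) (t, x)) :=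
      fderiv_pi fun k => ((hv k).differentiable (by simp)).differentiableAt
    rw [hpi, ContinuousLinearMap.pi_apply]
    exact (pd_eq_s10 (hv k) i t x).symm
  have hterm1 : fderiv ℝ F (t, x) ((0 : ℝ), fderiv ℝ V (t, x) (0, Pi.single i 1))
      = ∑ k, pd i (fun s y => v s y k) t x * pd k f t x := by
    rw [fderiv_dir hf]
    exact Finset.sum_congr rfl fun k _ => by rw [hyk k]
  have hR : Dt v (pd i f) t x
      = fderiv ℝ (fderiv ℝ F) (t, x) ((1 : ℝ), V (t, x)) ((0 : ℝ), Pi.single i 1) := by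
    rw [Dt_eq (smoothFn_pd i hf)]
    have h1 : (fun p : ℝ × (Fin 3 → ℝ) => pd i f p.1 p.2)
        = fun p => fderiv ℝ F p ((0 : ℝ), Pi.single i 1) :=
      funext fun p => pd_eq_s10 hf i p.1 p.2
    have h2 := hf2.clm_apply (hasFDerivAt_const ((0 : ℝ), Pi.single i (1 : ℝ)) (t, x))
    rw [h1, h2.fderiv]
    simp [ContinuousLinearMap.add_apply, ContinuousLinearMap.comp_apply,
      ContinuousLinearMap.flip_apply]
    rfl
  rw [hL, hterm1, hR, hsymm]
  ring


/-- For a divergence-free vector field `v`,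
`div(D_t³ v) = 4 Σ ∂_i v^j ∂_j(D_t² v)^i + 3 Σ ∂_i(D_t v)^j ∂_j(D_t v)^i
  - 12 Σ ∂_i v^l ∂_l v^j ∂_j(D_t v)^i + 6 Σ ∂_i v^l ∂_l v^j ∂_j v^k ∂_k v^i`. -/
theorem stmt_10 (v : ℝ → (Fin 3 → ℝ) → Fin 3 → ℝ)
    (hv : SmoothVec v)
    (hdiv : ∀ (t : ℝ) (x : Fin 3 → ℝ), ∑ i, pd i (fun s y => v s y i) t x = 0) :
    ∀ (t : ℝ) (x : Fin 3 → ℝ),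
      ∑ i, pd i (Dt v (Dt v (Dt v (fun s y => v s y i)))) t x
        = 4 * ∑ i, ∑ j, pd i (fun s y => v s y j) t x
              * pd j (Dt v (Dt v (fun s y => v s y i))) t x
          + 3 * ∑ i, ∑ j, pd i (Dt v (fun s y => v s y j)) t x
              * pd j (Dt v (fun s y => v s y i)) t x
          - 12 * ∑ i, ∑ j, ∑ l, pd i (fun s y => v s y l) t x
              * pd l (fun s y => v s y j) t x
              * pd j (Dt v (fun s y => v s y i)) t x
          + 6 * ∑ i, ∑ j, ∑ k, ∑ l, pd i (fun s y => v s y l) t x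
              * pd l (fun s y => v s y j) t x
              * pd j (fun s y => v s y k) t x
              * pd k (fun s y => v s y i) t x := by
  intro t x
  have e0 : (fun s (y : Fin 3 → ℝ) => ∑ i, pd i (fun s' y' => v s' y' i) s y)
      = fun _ _ => (0 : ℝ) := funext fun s => funext fun y => hdiv s y
  have B0 : (fun s (y : Fin 3 → ℝ) => ∑ i, Dt v (pd i (fun s' y' => v s' y' i)) s y)
      = fun _ _ => (0 : ℝ) := by
    rw [← Dt_sum3_fun (fun i => smoothFn_pd i (hv i)), e0, Dt_zero_fun]
  have B1 : (fun s (y : Fin 3 → ℝ) =>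
        ∑ i, Dt v (Dt v (pd i (fun s' y' => v s' y' i))) s y)
      = fun _ _ => (0 : ℝ) := by
    rw [← Dt_sum3_fun (fun i => smoothFn_Dt hv (smoothFn_pd i (hv i))), B0, Dt_zero_fun]
  have key0 : ∑ i, Dt v (Dt v (Dt v (pd i (fun s y => v s y i)))) t x = 0 := by
    rw [← Dt_sum3 (fun i => smoothFn_Dt hv (smoothFn_Dt hv (smoothFn_pd i (hv i)))) t x,
      B1, Dt_zero_fun]
  have hv' : ∀ i : Fin 3, SmoothFn (fun t x => v t x i) := hv
  simp (disch := repeat' first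
      | exact hv' _
      | apply smoothFn_pd
      | apply smoothFn_Dt hv
      | apply smoothFn_mul
      | apply smoothFn_add
      | apply smoothFn_sum3
      | intro _) only
    [pd_Dt_fun hv, Dt_add_fun, Dt_mul_fun, Dt_sum3_fun]
  simp only [Fin.sum_univ_three] at key0 ⊢
  linear_combination key0
end
end

section
/- Let v : ℝ × ℝ³ → ℝ³ and p : ℝ × ℝ³ → ℝ be smooth and satisfy the incompressible Euler equations: (D_t v)^i + ∂_i p = 0 for i = 1,2,3 and Σ_{i=1}^{3} ∂_i v^i = 0, at every point of ℝ × ℝ³. Then at every point: −Δ(D_t² p) = 4 Σ_{i,j=1}^{3} ∂_i v^j · ∂_j (D_t² v)^i + 3 Σ_{i,j=1}^{3} ∂_i (D_t v)^j · ∂_j (D_t v)^i − 12 Σ_{i,j,l=1}^{3} ∂_i v^l · ∂_l v^j · ∂_j (D_t v)^i + 6 Σ_{i,j,k,l=1}^{3} ∂_i v^l · ∂_l v^j · ∂_j v^k · ∂_k v^i + Σ_{j=1}^{3} ∂_j ( Σ_{i=1}^{3} ( 2 ∂_j v^i · (D_t² v)^i + ∂_j (D_t v)^i · (D_t v)^i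 ) ), where D_t² g := D_t(D_t g) and Δg := Σ_{i=1}^{3} ∂_i ∂_i g. -/
noncomputable section

namespace S11

abbrev E3 : Type := ℝ × (Fin 3 → ℝ)

def unc (f : ℝ → (Fin 3 → ℝ) → ℝ) : E3 → ℝ := fun q => f q.1 q.2

def Dd (u : E3) (f : ℝ → (Fin 3 → ℝ) → ℝ) : ℝ → (Fin 3 → ℝ) → ℝ :=
  fun t x => fderiv ℝ (unc f) (t, x) u

def ei (i : Fin 3) : E3 := (0, Pi.single i 1)
def τ : E3 := (1, 0)

variable {f g : ℝ → (Fin 3 → ℝ) → ℝ} {u w : E3} {i j : Fin 3}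

lemma dAt (hf : SmoothFn f) (q : E3) : DifferentiableAt ℝ (unc f) q :=
  ((hf : ContDiff ℝ (⊤ : ℕ∞) (unc f)).differentiable (by simp)).differentiableAt

lemma pd_eq_Dd (hf : SmoothFn f) (i : Fin 3) : pd i f = Dd (ei i) f := by
  funext t x
  have h1 : HasFDerivAt (fun y : Fin 3 → ℝ => (t, y))
      (ContinuousLinearMap.inr ℝ ℝ (Fin 3 → ℝ)) x := hasFDerivAt_prodMk_right t x
  have h2 : HasFDerivAt (f t)
      ((fderiv ℝ (unc f) (t, x)).comp (ContinuousLinearMap.inr ℝ ℝ (Fin 3 → ℝ))) x :=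
    (dAt hf (t, x)).hasFDerivAt.comp x h1
  show fderiv ℝ (f t) x (Pi.single i 1) = _
  rw [h2.fderiv]
  rfl

lemma pt_eq_Dd (hf : SmoothFn f) : pt f = Dd τ f := by
  funext t x
  have h1 : HasFDerivAt (fun s : ℝ => (s, x))
      (ContinuousLinearMap.inl ℝ ℝ (Fin 3 → ℝ)) t := hasFDerivAt_prodMk_left t x
  have h2 : HasFDerivAt (fun s => f s x)
      ((fderiv ℝ (unc f) (t, x)).comp (ContinuousLinearMap.inl ℝ ℝ (Fin 3 → ℝ))) t :=
    by have h3 := (dAt hf (t, x)).hasFDerivAt.comp t h1; exact h3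
  show deriv (fun s => f s x) t = _
  rw [deriv, h2.fderiv]
  rfl

lemma smooth_Dd (hf : SmoothFn f) (u : E3) : SmoothFn (Dd u f) := by
  have h : ContDiff ℝ (⊤ : ℕ∞) (fun q : E3 => fderiv ℝ (unc f) q u) :=
    (ContinuousLinearMap.apply ℝ ℝ u).contDiff.comp
      ((hf : ContDiff ℝ (⊤ : ℕ∞) (unc f)).fderiv_right (by simp))
  exact h

lemma Dd_comm (hf : SmoothFn f) (u w : E3) : Dd u (Dd w f) = Dd w (Dd u f) := by
  have hD : ∀ q : E3, DifferentiableAt ℝ (fderiv ℝ (unc f)) q := fun q =>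
    ((((hf : ContDiff ℝ (⊤ : ℕ∞) (unc f)).fderiv_right (m := (⊤ : ℕ∞)) (by simp))).differentiable (by simp)).differentiableAt
  have e1 : ∀ (z : E3) (q : E3), fderiv ℝ (fun q' : E3 => fderiv ℝ (unc f) q' z) q
      = (ContinuousLinearMap.apply ℝ ℝ z).comp (fderiv ℝ (fderiv ℝ (unc f)) q) := by
    intro z q
    exact ((ContinuousLinearMap.apply ℝ ℝ z).hasFDerivAt.comp q (hD q).hasFDerivAt).fderiv
  funext t x
  show fderiv ℝ (unc (Dd w f)) (t, x) u = fderiv ℝ (unc (Dd u f)) (t, x) w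
  have hw : unc (Dd w f) = fun q : E3 => fderiv ℝ (unc f) q w := rfl
  have hu : unc (Dd u f) = fun q : E3 => fderiv ℝ (unc f) q u := rfl
  rw [hw, hu, e1, e1]
  exact second_derivative_symmetric (f := unc f)
    (fun q => (dAt hf q).hasFDerivAt) (hD (t, x)).hasFDerivAt u w

lemma Dd_add (hf : SmoothFn f) (hg : SmoothFn g) (u : E3) :
    Dd u (fun t x => f t x + g t x) = fun t x => Dd u f t x + Dd u g t x := by
  funext t x
  have h : fderiv ℝ (fun q : E3 => unc f q + unc g q) (t, x)
      = fderiv ℝ (unc f) (t, x) + fderiv ℝ (unc g) (t, x) :=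
    fderiv_add (dAt hf _) (dAt hg _)
  show fderiv ℝ (fun q : E3 => unc f q + unc g q) (t, x) u = _
  rw [h]; rfl

lemma Dd_mul (hf : SmoothFn f) (hg : SmoothFn g) (u : E3) :
    Dd u (fun t x => f t x * g t x)
      = fun t x => Dd u f t x * g t x + f t x * Dd u g t x := by
  funext t x
  have h : fderiv ℝ (fun q : E3 => unc f q * unc g q) (t, x)
      = unc f (t, x) • fderiv ℝ (unc g) (t, x) + unc g (t, x) • fderiv ℝ (unc f) (t, x) :=
    fderiv_mul (dAt hf _) (dAt hg _)
  show fderiv ℝ (fun q : E3 => unc f q * unc g q) (t, x) u = _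
  rw [h]
  exact (by ring : f t x * Dd u g t x + g t x * Dd u f t x
    = Dd u f t x * g t x + f t x * Dd u g t x)

lemma Dd_neg (hf : SmoothFn f) (u : E3) :
    Dd u (fun t x => -(f t x)) = fun t x => -(Dd u f t x) := by
  funext t x
  have h : fderiv ℝ (fun q : E3 => -(unc f q)) (t, x) = -(fderiv ℝ (unc f) (t, x)) :=
    fderiv_neg
  show fderiv ℝ (fun q : E3 => -(unc f q)) (t, x) u = _
  rw [h]; rfl

lemma Dd_sum {ι : Type} [Fintype ι] {F : ι → ℝ → (Fin 3 → ℝ) → ℝ}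
    (hF : ∀ k, SmoothFn (F k)) (u : E3) :
    Dd u (fun t x => ∑ k, F k t x) = fun t x => ∑ k, Dd u (F k) t x := by
  funext t x
  have h : fderiv ℝ (fun q : E3 => ∑ k, unc (F k) q) (t, x)
      = ∑ k, fderiv ℝ (unc (F k)) (t, x) :=
    fderiv_fun_sum (fun k _ => dAt (hF k) _)
  show fderiv ℝ (fun q : E3 => ∑ k, unc (F k) q) (t, x) u = _
  rw [h]
  exact ContinuousLinearMap.sum_apply _ _ _

lemma Dd_const (c : ℝ) (u : E3) : Dd u (fun _ _ => c) = fun _ _ => 0 := by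
  funext t x
  show fderiv ℝ (fun _ : E3 => c) (t, x) u = 0
  rw [fderiv_fun_const]
  rfl

lemma smooth_add (hf : SmoothFn f) (hg : SmoothFn g) :
    SmoothFn (fun t x => f t x + g t x) := ContDiff.add hf hg

lemma smooth_mul (hf : SmoothFn f) (hg : SmoothFn g) :
    SmoothFn (fun t x => f t x * g t x) := ContDiff.mul hf hg

lemma smooth_neg (hf : SmoothFn f) : SmoothFn (fun t x => -(f t x)) := ContDiff.neg hf

lemma smooth_const (c : ℝ) : SmoothFn (fun _ _ => c) := contDiff_const

lemma smooth_sum {ι : Type} [Fintype ι] {F : ι → ℝ → (Fin 3 → ℝ) → ℝ}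
    (hF : ∀ k, SmoothFn (F k)) : SmoothFn (fun t x => ∑ k, F k t x) :=
  ContDiff.sum (fun k _ => hF k)

lemma smooth_pd (hf : SmoothFn f) (i : Fin 3) : SmoothFn (pd i f) := by
  rw [pd_eq_Dd hf]; exact smooth_Dd hf _

lemma smooth_pt (hf : SmoothFn f) : SmoothFn (pt f) := by
  rw [pt_eq_Dd hf]; exact smooth_Dd hf _

variable {v : ℝ → (Fin 3 → ℝ) → Fin 3 → ℝ}

lemma smooth_Dt (hv : SmoothVec v) (hf : SmoothFn f) : SmoothFn (Dt v f) := by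
  have : Dt v f = fun t x => pt f t x + ∑ k, (fun t x => v t x k * pd k f t x) t x := rfl
  rw [this]
  exact smooth_add (smooth_pt hf) (smooth_sum (fun k => smooth_mul (hv k) (smooth_pd hf k)))

def Vv (v : ℝ → (Fin 3 → ℝ) → Fin 3 → ℝ) (i : Fin 3) : ℝ → (Fin 3 → ℝ) → ℝ :=
  fun t x => v t x i

lemma pd_add (hf : SmoothFn f) (hg : SmoothFn g) (i : Fin 3) :
    pd i (fun t x => f t x + g t x) = fun t x => pd i f t x + pd i g t x := by
  rw [pd_eq_Dd (smooth_add hf hg), Dd_add hf hg, ← pd_eq_Dd hf i, ← pd_eq_Dd hg i]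

lemma pd_mul (hf : SmoothFn f) (hg : SmoothFn g) (i : Fin 3) :
    pd i (fun t x => f t x * g t x)
      = fun t x => pd i f t x * g t x + f t x * pd i g t x := by
  rw [pd_eq_Dd (smooth_mul hf hg), Dd_mul hf hg, ← pd_eq_Dd hf i, ← pd_eq_Dd hg i]

lemma pd_neg (hf : SmoothFn f) (i : Fin 3) :
    pd i (fun t x => -(f t x)) = fun t x => -(pd i f t x) := by
  rw [pd_eq_Dd (smooth_neg hf), Dd_neg hf, ← pd_eq_Dd hf i]

lemma pd_sum {ι : Type} [Fintype ι] {F : ι → ℝ → (Fin 3 → ℝ) → ℝ}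
    (hF : ∀ k, SmoothFn (F k)) (i : Fin 3) :
    pd i (fun t x => ∑ k, F k t x) = fun t x => ∑ k, pd i (F k) t x := by
  rw [pd_eq_Dd (smooth_sum hF), Dd_sum hF]
  funext t x
  exact Finset.sum_congr rfl (fun k _ => by rw [← pd_eq_Dd (hF k) i])

lemma pt_add (hf : SmoothFn f) (hg : SmoothFn g) :
    pt (fun t x => f t x + g t x) = fun t x => pt f t x + pt g t x := by
  rw [pt_eq_Dd (smooth_add hf hg), Dd_add hf hg, ← pt_eq_Dd hf, ← pt_eq_Dd hg]

lemma pt_mul (hf : SmoothFn f) (hg : SmoothFn g) :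
    pt (fun t x => f t x * g t x)
      = fun t x => pt f t x * g t x + f t x * pt g t x := by
  rw [pt_eq_Dd (smooth_mul hf hg), Dd_mul hf hg, ← pt_eq_Dd hf, ← pt_eq_Dd hg]

lemma pt_sum {ι : Type} [Fintype ι] {F : ι → ℝ → (Fin 3 → ℝ) → ℝ}
    (hF : ∀ k, SmoothFn (F k)) :
    pt (fun t x => ∑ k, F k t x) = fun t x => ∑ k, pt (F k) t x := by
  rw [pt_eq_Dd (smooth_sum hF), Dd_sum hF]
  funext t x
  exact Finset.sum_congr rfl (fun k _ => by rw [← pt_eq_Dd (hF k)])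

lemma pd_pd_comm (hf : SmoothFn f) (i j : Fin 3) : pd i (pd j f) = pd j (pd i f) := by
  rw [pd_eq_Dd hf j, pd_eq_Dd (smooth_Dd hf _) i, Dd_comm hf, ← pd_eq_Dd hf i,
    ← pd_eq_Dd (smooth_pd hf i) j]

lemma pd_pt_comm (hf : SmoothFn f) (i : Fin 3) : pd i (pt f) = pt (pd i f) := by
  rw [pt_eq_Dd hf, pd_eq_Dd (smooth_Dd hf _) i, Dd_comm hf, ← pd_eq_Dd hf i,
    ← pt_eq_Dd (smooth_pd hf i)]

lemma pd_const (i : Fin 3) (c : ℝ) : pd i (fun _ _ => c) = fun _ _ => 0 := by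
  funext t x
  show fderiv ℝ (fun _ => c) x (Pi.single i 1) = 0
  rw [fderiv_fun_const]; rfl

lemma pt_const (c : ℝ) : pt (fun _ _ => c) = fun _ _ => 0 := by
  funext t x
  show deriv (fun _ => c) t = 0
  exact deriv_const t c

variable {v : ℝ → (Fin 3 → ℝ) → Fin 3 → ℝ}

lemma Dt_const (c : ℝ) : Dt v (fun _ _ => c) = fun _ _ => 0 := by
  funext t x
  show pt (fun _ _ => c) t x + ∑ k, v t x k * pd k (fun _ _ => c) t x = 0
  simp [pt_const, pd_const]

lemma Dt_add (hf : SmoothFn f) (hg : SmoothFn g) :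
    Dt v (fun t x => f t x + g t x) = fun t x => Dt v f t x + Dt v g t x := by
  funext t x
  show pt (fun t x => f t x + g t x) t x
      + ∑ k, v t x k * pd k (fun t x => f t x + g t x) t x = _
  simp only [pt_add hf hg, pd_add hf hg, Dt, mul_add, Finset.sum_add_distrib]
  ring

lemma Dt_mul (hf : SmoothFn f) (hg : SmoothFn g) :
    Dt v (fun t x => f t x * g t x)
      = fun t x => Dt v f t x * g t x + f t x * Dt v g t x := by
  funext t x
  show pt (fun t x => f t x * g t x) t x
      + ∑ k, v t x k * pd k (fun t x => f t x * g t x) t x = _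
  simp only [pt_mul hf hg, pd_mul hf hg, Dt, mul_add, Finset.sum_add_distrib,
    add_mul, Finset.sum_mul, Finset.mul_sum, mul_assoc, mul_comm, mul_left_comm]
  ring

lemma Dt_sum {ι : Type} [Fintype ι] {F : ι → ℝ → (Fin 3 → ℝ) → ℝ}
    (hF : ∀ k, SmoothFn (F k)) :
    Dt v (fun t x => ∑ k, F k t x) = fun t x => ∑ k, Dt v (F k) t x := by
  funext t x
  show pt (fun t x => ∑ k, F k t x) t x
      + ∑ j, v t x j * pd j (fun t x => ∑ k, F k t x) t x = _
  simp only [pt_sum hF, pd_sum hF, Dt, Finset.mul_sum]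
  rw [Finset.sum_comm, ← Finset.sum_add_distrib]

lemma pd_Dt (hv : SmoothVec v) (hf : SmoothFn f) (j : Fin 3) :
    pd j (Dt v f) = fun t x => Dt v (pd j f) t x
      + ∑ k, pd j (Vv v k) t x * pd k f t x := by
  have hv' : ∀ k : Fin 3, SmoothFn (Vv v k) := hv
  have h0 : Dt v f = fun t x => pt f t x + ∑ k, Vv v k t x * pd k f t x := rfl
  have hm : ∀ k : Fin 3, pd j (fun t x => Vv v k t x * pd k f t x)
      = fun t x => pd j (Vv v k) t x * pd k f t x + Vv v k t x * pd j (pd k f) t x :=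
    fun k => pd_mul (hv' k) (smooth_pd hf k) j
  have hc : ∀ k : Fin 3, pd j (pd k f) = pd k (pd j f) := fun k => pd_pd_comm hf j k
  funext t x
  rw [h0, pd_add (smooth_pt hf) (smooth_sum fun k => smooth_mul (hv' k) (smooth_pd hf k)),
    pd_sum (fun k => smooth_mul (hv' k) (smooth_pd hf k))]
  simp only [hm, hc, pd_pt_comm hf]
  simp only [Dt, Vv, Finset.sum_add_distrib]
  ring

lemma pt_neg (hf : SmoothFn f) :
    pt (fun t x => -(f t x)) = fun t x => -(pt f t x) := by
  rw [pt_eq_Dd (smooth_neg hf), Dd_neg hf, ← pt_eq_Dd hf]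

lemma smooth_const_mul (c : ℝ) (hf : SmoothFn f) :
    SmoothFn (fun t x => c * f t x) := ContDiff.mul contDiff_const hf

lemma pd_const_mul (c : ℝ) (hf : SmoothFn f) (i : Fin 3) :
    pd i (fun t x => c * f t x) = fun t x => c * pd i f t x := by
  rw [pd_eq_Dd (smooth_const_mul c hf)]
  have h := Dd_mul (smooth_const c) hf (ei i)
  rw [h, Dd_const, ← pd_eq_Dd hf i]
  funext t x; simp

lemma pt_const_mul (c : ℝ) (hf : SmoothFn f) :
    pt (fun t x => c * f t x) = fun t x => c * pt f t x := by
  rw [pt_eq_Dd (smooth_const_mul c hf)]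
  have h := Dd_mul (smooth_const c) hf τ
  rw [h, Dd_const, ← pt_eq_Dd hf]
  funext t x; simp

lemma Dt_neg (hf : SmoothFn f) :
    Dt v (fun t x => -(f t x)) = fun t x => -(Dt v f t x) := by
  funext t x
  show pt (fun t x => -(f t x)) t x + ∑ k, v t x k * pd k (fun t x => -(f t x)) t x = _
  simp only [Dt, pt_neg hf, pd_neg hf, mul_neg, Finset.sum_neg_distrib]
  ring

lemma Dt_const_mul (c : ℝ) (hf : SmoothFn f) :
    Dt v (fun t x => c * f t x) = fun t x => c * Dt v f t x := by
  funext t x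
  show pt (fun t x => c * f t x) t x + ∑ k, v t x k * pd k (fun t x => c * f t x) t x = _
  simp only [Dt, pt_const_mul c hf, pd_const_mul c hf, mul_add, Finset.mul_sum]
  congr 1
  refine Finset.sum_congr rfl fun k _ => by ring

lemma Dt_sub (hf : SmoothFn f) (hg : SmoothFn g) :
    Dt v (fun t x => f t x - g t x) = fun t x => Dt v f t x - Dt v g t x := by
  have h0 : (fun t x => f t x - g t x) = fun t x => f t x + -(g t x) := by
    funext t x; ring
  rw [h0, Dt_add hf (smooth_neg hg), Dt_neg hg]
  funext t x; ring


section main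

variable (v : ℝ → (Fin 3 → ℝ) → Fin 3 → ℝ) (p : ℝ → (Fin 3 → ℝ) → ℝ)

def Av (i : Fin 3) : ℝ → (Fin 3 → ℝ) → ℝ := Dt v (Vv v i)
def A2v (i : Fin 3) : ℝ → (Fin 3 → ℝ) → ℝ := Dt v (Av v i)
def A3v (i : Fin 3) : ℝ → (Fin 3 → ℝ) → ℝ := Dt v (A2v v i)
def T0 : ℝ → (Fin 3 → ℝ) → ℝ := fun t x => ∑ i, ∑ j, pd i (Vv v j) t x * pd j (Vv v i) t x
def T1 : ℝ → (Fin 3 → ℝ) → ℝ := fun t x => ∑ i, ∑ j, pd i (Vv v j) t x * pd j (Av v i) t x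
def T2 : ℝ → (Fin 3 → ℝ) → ℝ := fun t x => ∑ i, ∑ j, pd i (Vv v j) t x * pd j (A2v v i) t x
def W0 : ℝ → (Fin 3 → ℝ) → ℝ := fun t x => ∑ i, ∑ j, pd i (Av v j) t x * pd j (Vv v i) t x
def Pq : ℝ → (Fin 3 → ℝ) → ℝ := fun t x => ∑ i, ∑ j, pd i (Av v j) t x * pd j (Av v i) t x
def U0 : ℝ → (Fin 3 → ℝ) → ℝ := fun t x =>
  ∑ i, ∑ j, ∑ l, pd i (Vv v l) t x * pd l (Vv v j) t x * pd j (Vv v i) t x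
def U1 : ℝ → (Fin 3 → ℝ) → ℝ := fun t x =>
  ∑ i, ∑ j, ∑ l, pd i (Vv v l) t x * pd l (Vv v j) t x * pd j (Av v i) t x
def Rq : ℝ → (Fin 3 → ℝ) → ℝ := fun t x =>
  ∑ i, ∑ j, ∑ k, ∑ l, pd i (Vv v l) t x * pd l (Vv v j) t x * pd j (Vv v k) t x
    * pd k (Vv v i) t x
def Gd (j : Fin 3) : ℝ → (Fin 3 → ℝ) → ℝ := fun t x =>
  ∑ k, (2 * pd j (Vv v k) t x * A2v v k t x + pd j (Av v k) t x * Av v k t x)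

set_option maxHeartbeats 2000000 in
theorem main (hv : SmoothVec v) (hp : SmoothFn p)
    (hEuler : ∀ (i : Fin 3) (t : ℝ) (x : Fin 3 → ℝ),
      Dt v (fun s y => v s y i) t x + pd i p t x = 0)
    (hdiv : ∀ (t : ℝ) (x : Fin 3 → ℝ), ∑ i, pd i (fun s y => v s y i) t x = 0) :
    ∀ (t : ℝ) (x : Fin 3 → ℝ),
      -(∑ i, pd i (pd i (Dt v (Dt v p))) t x)
        = 4 * T2 v t x + 3 * Pq v t x - 12 * U1 v t x + 6 * Rq v t x
          + ∑ j, pd j (Gd v j) t x := by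
  have hv' : ∀ i, SmoothFn (Vv v i) := hv
  have sAv : ∀ i, SmoothFn (Av v i) := fun i => smooth_Dt hv (hv' i)
  have sA2v : ∀ i, SmoothFn (A2v v i) := fun i => smooth_Dt hv (sAv i)
  have sA3v : ∀ i, SmoothFn (A3v v i) := fun i => smooth_Dt hv (sA2v i)
  have sDtp : SmoothFn (Dt v p) := smooth_Dt hv hp
  -- Euler rephrased
  have hE1 : ∀ i, Av v i = fun t x => -(pd i p t x) := by
    intro i; funext t x
    have h : Av v i t x + pd i p t x = 0 := hEuler i t x
    linarith
  have hgradp : ∀ i, pd i p = fun t x => -(Av v i t x) := by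
    intro i; funext t x
    have h : Av v i t x + pd i p t x = 0 := hEuler i t x
    show pd i p t x = -(Av v i t x); linarith
  have hdiv' : (fun t x => ∑ i, pd i (Vv v i) t x) = (fun _ _ => (0:ℝ)) := by
    funext t x; exact hdiv t x
  -- commutator instances
  have cAv : ∀ i k, pd i (Av v k) = fun t x => Dt v (pd i (Vv v k)) t x
      + ∑ l, pd i (Vv v l) t x * pd l (Vv v k) t x := fun i k => pd_Dt hv (hv' k) i
  have cA2v : ∀ i k, pd i (A2v v k) = fun t x => Dt v (pd i (Av v k)) t x
      + ∑ l, pd i (Vv v l) t x * pd l (Av v k) t x := fun i k => pd_Dt hv (sAv k) i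
  have cA3v : ∀ i k, pd i (A3v v k) = fun t x => Dt v (pd i (A2v v k)) t x
      + ∑ l, pd i (Vv v l) t x * pd l (A2v v k) t x := fun i k => pd_Dt hv (sA2v k) i
  have DtpdV : ∀ i k, Dt v (pd i (Vv v k)) = fun t x => pd i (Av v k) t x
      - ∑ l, pd i (Vv v l) t x * pd l (Vv v k) t x := by
    intro i k; funext t x
    have h := congrFun (congrFun (cAv i k) t) x
    linarith
  have DtpdAv : ∀ i k, Dt v (pd i (Av v k)) = fun t x => pd i (A2v v k) t x
      - ∑ l, pd i (Vv v l) t x * pd l (Av v k) t x := by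
    intro i k; funext t x
    have h := congrFun (congrFun (cA2v i k) t) x
    linarith
  -- divergence identities
  have S1 : (fun t x => ∑ i, pd i (Av v i) t x) = T0 v := by
    funext t x
    simp only [cAv]
    rw [Finset.sum_add_distrib]
    have h0 : ∑ i, Dt v (pd i (Vv v i)) t x = 0 := by
      have hs := Dt_sum (v := v) (fun i : Fin 3 => smooth_pd (hv' i) i)
      rw [← congrFun (congrFun hs t) x, hdiv', Dt_const]
    rw [h0, zero_add]
    simp only [T0]
  have S2 : (fun t x => ∑ i, pd i (A2v v i) t x) = fun t x => Dt v (T0 v) t x + T1 v t x := by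
    funext t x
    simp only [cA2v]
    rw [Finset.sum_add_distrib]
    have h0 : ∑ i, Dt v (pd i (Av v i)) t x = Dt v (T0 v) t x := by
      have hs := Dt_sum (v := v) (fun i : Fin 3 => smooth_pd (sAv i) i)
      rw [← congrFun (congrFun hs t) x, S1]
    rw [h0]
    simp only [T1]
  have sT0 : SmoothFn (T0 v) := smooth_sum fun i => smooth_sum fun j =>
    smooth_mul (smooth_pd (hv' j) i) (smooth_pd (hv' i) j)
  have sT1 : SmoothFn (T1 v) := smooth_sum fun i => smooth_sum fun j =>
    smooth_mul (smooth_pd (hv' j) i) (smooth_pd (sAv i) j)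
  have sW0 : SmoothFn (W0 v) := smooth_sum fun i => smooth_sum fun j =>
    smooth_mul (smooth_pd (sAv j) i) (smooth_pd (hv' i) j)
  have sU0 : SmoothFn (U0 v) := smooth_sum fun i => smooth_sum fun j =>
    smooth_sum fun l => smooth_mul (smooth_mul (smooth_pd (hv' l) i)
      (smooth_pd (hv' j) l)) (smooth_pd (hv' i) j)
  have S3 : ∀ t x, ∑ i, pd i (A3v v i) t x
      = Dt v (fun t x => Dt v (T0 v) t x + T1 v t x) t x + T2 v t x := by
    intro t x
    simp only [cA3v]
    rw [Finset.sum_add_distrib]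
    have h0 : ∑ i, Dt v (pd i (A2v v i)) t x
        = Dt v (fun t x => Dt v (T0 v) t x + T1 v t x) t x := by
      have hs := Dt_sum (v := v) (fun i : Fin 3 => smooth_pd (sA2v i) i)
      rw [← congrFun (congrFun hs t) x, S2]
    rw [h0]
    simp only [T2]
  -- material derivative computations
  have DtT0 : Dt v (T0 v) = fun t x => W0 v t x + T1 v t x - 2 * U0 v t x := by
    have e : T0 v = fun t x => ∑ i, (fun i t x => ∑ j,
        pd i (Vv v j) t x * pd j (Vv v i) t x) i t x := rfl
    funext t x
    rw [e, Dt_sum (fun i : Fin 3 => smooth_sum (fun j : Fin 3 =>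
      smooth_mul (smooth_pd (hv' j) i) (smooth_pd (hv' i) j)))]
    have h2 : ∀ i : Fin 3, Dt v (fun t x => ∑ j, pd i (Vv v j) t x * pd j (Vv v i) t x)
        = fun t x => ∑ j, Dt v (fun t x => pd i (Vv v j) t x * pd j (Vv v i) t x) t x :=
      fun i => Dt_sum (fun j => smooth_mul (smooth_pd (hv' j) i) (smooth_pd (hv' i) j))
    have h3 : ∀ i j : Fin 3, Dt v (fun t x => pd i (Vv v j) t x * pd j (Vv v i) t x)
        = fun t x => Dt v (pd i (Vv v j)) t x * pd j (Vv v i) t x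
          + pd i (Vv v j) t x * Dt v (pd j (Vv v i)) t x :=
      fun i j => Dt_mul (smooth_pd (hv' j) i) (smooth_pd (hv' i) j)
    simp only [h2]
    simp only [h3]
    simp only [DtpdV]
    simp only [W0, T1, U0, Fin.sum_univ_three]
    ring
  have DtT1 : ∀ t x, Dt v (T1 v) t x = Pq v t x + T2 v t x - 2 * U1 v t x := by
    intro t x
    have e : T1 v = fun t x => ∑ i, (fun i t x => ∑ j,
        pd i (Vv v j) t x * pd j (Av v i) t x) i t x := rfl
    rw [e, Dt_sum (fun i : Fin 3 => smooth_sum (fun j : Fin 3 =>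
      smooth_mul (smooth_pd (hv' j) i) (smooth_pd (sAv i) j)))]
    have h2 : ∀ i : Fin 3, Dt v (fun t x => ∑ j, pd i (Vv v j) t x * pd j (Av v i) t x)
        = fun t x => ∑ j, Dt v (fun t x => pd i (Vv v j) t x * pd j (Av v i) t x) t x :=
      fun i => Dt_sum (fun j => smooth_mul (smooth_pd (hv' j) i) (smooth_pd (sAv i) j))
    have h3 : ∀ i j : Fin 3, Dt v (fun t x => pd i (Vv v j) t x * pd j (Av v i) t x)
        = fun t x => Dt v (pd i (Vv v j)) t x * pd j (Av v i) t x
          + pd i (Vv v j) t x * Dt v (pd j (Av v i)) t x :=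
      fun i j => Dt_mul (smooth_pd (hv' j) i) (smooth_pd (sAv i) j)
    simp only [h2]
    simp only [h3]
    simp only [DtpdV, DtpdAv]
    simp only [Pq, T2, U1, Fin.sum_univ_three]
    ring
  have DtW0 : ∀ t x, Dt v (W0 v) t x = T2 v t x + Pq v t x - 2 * U1 v t x := by
    intro t x
    have e : W0 v = fun t x => ∑ i, (fun i t x => ∑ j,
        pd i (Av v j) t x * pd j (Vv v i) t x) i t x := rfl
    rw [e, Dt_sum (fun i : Fin 3 => smooth_sum (fun j : Fin 3 =>
      smooth_mul (smooth_pd (sAv j) i) (smooth_pd (hv' i) j)))]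
    have h2 : ∀ i : Fin 3, Dt v (fun t x => ∑ j, pd i (Av v j) t x * pd j (Vv v i) t x)
        = fun t x => ∑ j, Dt v (fun t x => pd i (Av v j) t x * pd j (Vv v i) t x) t x :=
      fun i => Dt_sum (fun j => smooth_mul (smooth_pd (sAv j) i) (smooth_pd (hv' i) j))
    have h3 : ∀ i j : Fin 3, Dt v (fun t x => pd i (Av v j) t x * pd j (Vv v i) t x)
        = fun t x => Dt v (pd i (Av v j)) t x * pd j (Vv v i) t x
          + pd i (Av v j) t x * Dt v (pd j (Vv v i)) t x :=
      fun i j => Dt_mul (smooth_pd (sAv j) i) (smooth_pd (hv' i) j)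
    simp only [h2]
    simp only [h3]
    simp only [DtpdV, DtpdAv]
    simp only [Pq, T2, U1, Fin.sum_univ_three]
    ring
  have DtU0 : ∀ t x, Dt v (U0 v) t x = 3 * U1 v t x - 3 * Rq v t x := by
    intro t x
    have e : U0 v = fun t x => ∑ i, (fun i t x => ∑ j, ∑ l,
        pd i (Vv v l) t x * pd l (Vv v j) t x * pd j (Vv v i) t x) i t x := rfl
    rw [e, Dt_sum (fun i : Fin 3 => smooth_sum (fun j : Fin 3 => smooth_sum (fun l : Fin 3 =>
      smooth_mul (smooth_mul (smooth_pd (hv' l) i) (smooth_pd (hv' j) l))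
        (smooth_pd (hv' i) j))))]
    have h2 : ∀ i : Fin 3, Dt v (fun t x => ∑ j, ∑ l,
          pd i (Vv v l) t x * pd l (Vv v j) t x * pd j (Vv v i) t x)
        = fun t x => ∑ j, Dt v (fun t x => ∑ l,
          pd i (Vv v l) t x * pd l (Vv v j) t x * pd j (Vv v i) t x) t x :=
      fun i => Dt_sum (fun j => smooth_sum (fun l =>
        smooth_mul (smooth_mul (smooth_pd (hv' l) i) (smooth_pd (hv' j) l))
          (smooth_pd (hv' i) j)))
    have h2' : ∀ i j : Fin 3, Dt v (fun t x => ∑ l,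
          pd i (Vv v l) t x * pd l (Vv v j) t x * pd j (Vv v i) t x)
        = fun t x => ∑ l, Dt v (fun t x =>
          pd i (Vv v l) t x * pd l (Vv v j) t x * pd j (Vv v i) t x) t x :=
      fun i j => Dt_sum (fun l =>
        smooth_mul (smooth_mul (smooth_pd (hv' l) i) (smooth_pd (hv' j) l))
          (smooth_pd (hv' i) j))
    have h3 : ∀ i j l : Fin 3, Dt v (fun t x =>
          pd i (Vv v l) t x * pd l (Vv v j) t x * pd j (Vv v i) t x)
        = fun t x => Dt v (fun t x => pd i (Vv v l) t x * pd l (Vv v j) t x) t x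
            * pd j (Vv v i) t x
          + pd i (Vv v l) t x * pd l (Vv v j) t x * Dt v (pd j (Vv v i)) t x :=
      fun i j l => Dt_mul (smooth_mul (smooth_pd (hv' l) i) (smooth_pd (hv' j) l))
        (smooth_pd (hv' i) j)
    have h4 : ∀ i j l : Fin 3, Dt v (fun t x => pd i (Vv v l) t x * pd l (Vv v j) t x)
        = fun t x => Dt v (pd i (Vv v l)) t x * pd l (Vv v j) t x
          + pd i (Vv v l) t x * Dt v (pd l (Vv v j)) t x :=
      fun i j l => Dt_mul (smooth_pd (hv' l) i) (smooth_pd (hv' j) l)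
    simp only [h2]
    simp only [h2']
    simp only [h3]
    simp only [h4]
    simp only [DtpdV]
    simp only [U1, Rq, Fin.sum_univ_three]
    ring
  -- S3 final value
  have S3v : ∀ t x, ∑ i, pd i (A3v v i) t x
      = 4 * T2 v t x + 3 * Pq v t x - 12 * U1 v t x + 6 * Rq v t x := by
    intro t x
    rw [S3 t x]
    have hA : Dt v (fun t x => Dt v (T0 v) t x + T1 v t x) t x
        = Dt v (Dt v (T0 v)) t x + Dt v (T1 v) t x :=
      congrFun (congrFun (Dt_add (smooth_Dt hv sT0) sT1) t) x
    rw [hA, DtT0]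
    have hB : Dt v (fun t x => W0 v t x + T1 v t x - 2 * U0 v t x) t x
        = Dt v (fun t x => W0 v t x + T1 v t x) t x - Dt v (fun t x => 2 * U0 v t x) t x :=
      congrFun (congrFun (Dt_sub (smooth_add sW0 sT1) (smooth_const_mul 2 sU0)) t) x
    rw [hB]
    have hC : Dt v (fun t x => W0 v t x + T1 v t x) t x = Dt v (W0 v) t x + Dt v (T1 v) t x :=
      congrFun (congrFun (Dt_add sW0 sT1) t) x
    rw [hC]
    have hD : Dt v (fun t x => 2 * U0 v t x) t x = 2 * Dt v (U0 v) t x :=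
      congrFun (congrFun (Dt_const_mul 2 sU0) t) x
    rw [hD, DtW0 t x, DtT1 t x, DtU0 t x]
    ring
  -- pressure steps
  have hDnAv : ∀ i, Dt v (fun t x => -(Av v i t x)) = fun t x => -(A2v v i t x) :=
    fun i => Dt_neg (sAv i)
  have step1 : ∀ i, pd i (Dt v p) = fun t x => -(A2v v i t x)
      + ∑ k, pd i (Vv v k) t x * -(Av v k t x) := by
    intro i; funext t x
    simp only [pd_Dt hv hp, hgradp, hDnAv]
  have step1' : ∀ i, pd i (Dt v (Dt v p)) = fun t x => -(A3v v i t x) + -(Gd v i t x) := by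
    intro i; funext t x
    simp only [pd_Dt hv sDtp, step1]
    have hDa : ∀ i : Fin 3, Dt v (fun t x => -(A2v v i t x)
          + ∑ k, pd i (Vv v k) t x * -(Av v k t x))
        = fun t x => Dt v (fun t x => -(A2v v i t x)) t x
          + Dt v (fun t x => ∑ k, pd i (Vv v k) t x * -(Av v k t x)) t x :=
      fun i => Dt_add (smooth_neg (sA2v i)) (smooth_sum fun k =>
        smooth_mul (smooth_pd (hv' k) i) (smooth_neg (sAv k)))
    have hDn2 : ∀ i : Fin 3, Dt v (fun t x => -(A2v v i t x)) = fun t x => -(A3v v i t x) :=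
      fun i => Dt_neg (sA2v i)
    have hDs : ∀ i : Fin 3, Dt v (fun t x => ∑ k, pd i (Vv v k) t x * -(Av v k t x))
        = fun t x => ∑ k, Dt v (fun t x => pd i (Vv v k) t x * -(Av v k t x)) t x :=
      fun i => Dt_sum (fun k => smooth_mul (smooth_pd (hv' k) i) (smooth_neg (sAv k)))
    have hDm : ∀ i k : Fin 3, Dt v (fun t x => pd i (Vv v k) t x * -(Av v k t x))
        = fun t x => Dt v (pd i (Vv v k)) t x * -(Av v k t x)
          + pd i (Vv v k) t x * Dt v (fun t x => -(Av v k t x)) t x :=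
      fun i k => Dt_mul (smooth_pd (hv' k) i) (smooth_neg (sAv k))
    simp only [hDa]
    simp only [hDn2]
    simp only [hDs]
    simp only [hDm]
    simp only [hDnAv]
    simp only [DtpdV]
    simp only [Gd, Fin.sum_univ_three]
    ring
  -- assembly
  intro t x
  have sGd : ∀ i, SmoothFn (Gd v i) := fun i => smooth_sum fun k =>
    smooth_add (smooth_mul (smooth_mul (smooth_const 2) (smooth_pd (hv' k) i)) (sA2v k))
      (smooth_mul (smooth_pd (sAv k) i) (sAv k))
  have hp1 : ∀ i : Fin 3, pd i (fun t x => -(A3v v i t x) + -(Gd v i t x))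
      = fun t x => pd i (fun t x => -(A3v v i t x)) t x
        + pd i (fun t x => -(Gd v i t x)) t x :=
    fun i => pd_add (smooth_neg (sA3v i)) (smooth_neg (sGd i)) i
  have hp2 : ∀ i : Fin 3, pd i (fun t x => -(A3v v i t x))
      = fun t x => -(pd i (A3v v i) t x) := fun i => pd_neg (sA3v i) i
  have hp3 : ∀ i : Fin 3, pd i (fun t x => -(Gd v i t x))
      = fun t x => -(pd i (Gd v i) t x) := fun i => pd_neg (sGd i) i
  have hsplit : ∀ i, pd i (pd i (Dt v (Dt v p))) t x
      = -(pd i (A3v v i) t x) + -(pd i (Gd v i) t x) := by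
    intro i
    rw [step1' i]
    simp only [hp1, hp2, hp3]
  simp only [hsplit]
  rw [Finset.sum_add_distrib]
  have h := S3v t x
  have h1 : ∑ i, -(pd i (A3v v i) t x) = -(∑ i, pd i (A3v v i) t x) := by
    rw [Finset.sum_neg_distrib]
  have h2 : ∑ i, -(pd i (Gd v i) t x) = -(∑ i, pd i (Gd v i) t x) := by
    rw [Finset.sum_neg_distrib]
  rw [h1, h2]
  have h3 : ∑ j, pd j (Gd v j) t x = ∑ i, pd i (Gd v i) t x := rfl
  rw [h3]
  linarith

end main

end S11

set_option maxHeartbeats 1000000 in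
/-- For a smooth solution of the incompressible Euler equations,
`-Δ(D_t² p)` equals the stated combination of velocity gradients, material
derivatives, and a divergence term. -/
theorem stmt_11 (v : ℝ → (Fin 3 → ℝ) → Fin 3 → ℝ) (p : ℝ → (Fin 3 → ℝ) → ℝ)
    (hv : SmoothVec v) (hp : SmoothFn p)
    (hEuler : ∀ (i : Fin 3) (t : ℝ) (x : Fin 3 → ℝ),
      Dt v (fun s y => v s y i) t x + pd i p t x = 0)
    (hdiv : ∀ (t : ℝ) (x : Fin 3 → ℝ), ∑ i, pd i (fun s y => v s y i) t x = 0) :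
    ∀ (t : ℝ) (x : Fin 3 → ℝ),
      -(∑ i, pd i (pd i (Dt v (Dt v p))) t x)
        = 4 * ∑ i, ∑ j, pd i (fun s y => v s y j) t x
              * pd j (Dt v (Dt v (fun s y => v s y i))) t x
          + 3 * ∑ i, ∑ j, pd i (Dt v (fun s y => v s y j)) t x
              * pd j (Dt v (fun s y => v s y i)) t x
          - 12 * ∑ i, ∑ j, ∑ l, pd i (fun s y => v s y l) t x
              * pd l (fun s y => v s y j) t x
              * pd j (Dt v (fun s y => v s y i)) t x
          + 6 * ∑ i, ∑ j, ∑ k, ∑ l, pd i (fun s y => v s y l) t x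
              * pd l (fun s y => v s y j) t x
              * pd j (fun s y => v s y k) t x
              * pd k (fun s y => v s y i) t x
          + ∑ j, pd j (fun s y => ∑ i,
              (2 * pd j (fun s' y' => v s' y' i) s y
                  * Dt v (Dt v (fun s' y' => v s' y' i)) s y
                + pd j (Dt v (fun s' y' => v s' y' i)) s y
                  * Dt v (fun s' y' => v s' y' i) s y)) t x := by
  intro t x
  exact S11.main v p hv hp hEuler hdiv t x
end
end
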